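/- arXiv:1612.04510 — 7 statements merged into one kernel-verified Lean document; each statement's English description precedes it below -/
import Mathlib

section
/- Let G be a simple graph on a finite vertex set. Let N_0 be the maximum size of a clique of G, let N_1 be the maximum size of a maximal clique that is not of size N_0 (a clique is maximal if it is not properly contained in another clique; cliques of size N_0 are called extremal), let N_2 be an upper bound on the size of the intersection of any two distinct extremal cliques, and let M be an upper bound on the number of maximal cliques of G. If N_0 - max(N_1, N_2) - 6·lg M/(2·lg 3 - 3) > 0 (logarithms base 2), then every set F of vertices admits at most 3^{N_0} colourings of its elements with 3 colours in which every colour class is a clique, with equality if and only if F is itself a clique of size N_0. -/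
/-- The number of admissible `r`-colourings of a vertex set `F`: colourings of the
elements of `F` with `r` colours in which every colour class is a clique of `G`. -/
noncomputable def admCount {V : Type*} (G : SimpleGraph V) (r : ℕ) (F : Finset V) : ℕ :=
  Nat.card {φ : F → Fin r //
    ∀ c : Fin r, G.IsClique {v : V | ∃ h : v ∈ F, φ ⟨v, h⟩ = c}}

lemma admCount_of_clique {V : Type*} [Fintype V] [DecidableEq V] (G : SimpleGraph V)
    (F : Finset V) (hF : G.IsClique (F : Set V)) : admCount G 3 F = 3 ^ F.card := by
  classical
  have hall : ∀ φ : F → Fin 3, ∀ c : Fin 3,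
      G.IsClique {v : V | ∃ h : v ∈ F, φ ⟨v, h⟩ = c} := by
    intro φ c
    apply hF.subset
    rintro v ⟨h, -⟩
    exact h
  rw [admCount, Nat.card_eq_fintype_card]
  rw [Fintype.card_eq.mpr ⟨Equiv.subtypeUnivEquiv hall⟩]
  rw [Fintype.card_fun, Fintype.card_fin, Fintype.card_coe]

lemma exists_maximal_containing {V : Type*} [Fintype V] [DecidableEq V] (G : SimpleGraph V)
    (C : Finset V) (hC : G.IsClique (C : Set V)) :
    ∃ S : Finset V, (G.IsClique (S : Set V) ∧
      ∀ u : Finset V, G.IsClique (u : Set V) → S ⊆ u → u = S) ∧ C ⊆ S := by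
  classical
  set 𝒮 : Finset (Finset V) :=
    Finset.univ.filter (fun u => G.IsClique (u : Set V) ∧ C ⊆ u) with h𝒮
  have hne : 𝒮.Nonempty := ⟨C, by simp [h𝒮, hC]⟩
  obtain ⟨S, hS, hmax⟩ := 𝒮.exists_max_image Finset.card hne
  simp only [h𝒮, Finset.mem_filter, Finset.mem_univ, true_and] at hS hmax
  refine ⟨S, ⟨hS.1, fun u hu hSu => ?_⟩, hS.2⟩
  have : u.card ≤ S.card := hmax u ⟨hu, hS.2.trans hSu⟩
  exact (Finset.eq_of_subset_of_card_le hSu this).symm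


lemma triple_bound {V : Type*} [Fintype V] [DecidableEq V] (G : SimpleGraph V) (F : Finset V)
    (N0 N' : ℕ) (S : Fin 3 → Finset V)
    (hcl : ∀ i, G.IsClique ((S i : Set V)))
    (hN0 : ∀ s : Finset V, G.IsClique (s : Set V) → s.card ≤ N0)
    (hNint : ∀ i j : Fin 3, S i ≠ S j → (S i ∩ S j).card ≤ N')
    (hne : ∃ i j : Fin 3, S i ≠ S j) (hN'0 : N' ≤ N0) :
    ((Finset.univ.filter (fun φ : F → Fin 3 => ∀ v : F, (v : V) ∈ S (φ v))).card) ^ 2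
      ≤ 9 ^ N' * 8 ^ (N0 - N') := by
  classical
  obtain ⟨c, hc⟩ : ∃ c : V → ℕ,
      ∀ w, c w = (Finset.univ.filter (fun i : Fin 3 => w ∈ S i)).card :=
    ⟨_, fun _ => rfl⟩
  have hc3 : ∀ w, c w ≤ 3 := by
    intro w
    rw [hc w]
    calc (Finset.univ.filter (fun i : Fin 3 => w ∈ S i)).card
        ≤ (Finset.univ : Finset (Fin 3)).card := Finset.card_filter_le _ _
    _ = 3 := by simp
  have hcmem : ∀ w, c w = 3 → ∀ k : Fin 3, w ∈ S k := by
    intro w hw k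
    have heq : Finset.univ.filter (fun i : Fin 3 => w ∈ S i) = Finset.univ := by
      apply Finset.eq_of_subset_of_card_le (Finset.subset_univ _)
      rw [← hc w, hw]
      simp
    have : k ∈ Finset.univ.filter (fun i : Fin 3 => w ∈ S i) := by
      rw [heq]; exact Finset.mem_univ k
    exact (Finset.mem_filter.mp this).2
  -- card of the filter as a product
  have e1 : (Finset.univ.filter (fun φ : F → Fin 3 => ∀ v : F, (v : V) ∈ S (φ v))).card
      = ∏ v ∈ F, c v := by
    rw [← Fintype.card_subtype]
    rw [Fintype.card_congr
      (Equiv.subtypePiEquivPi (p := fun (v : F) (i : Fin 3) => (v : V) ∈ S i))]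
    rw [Fintype.card_pi]
    have h1 : ∀ v : F, Fintype.card {i : Fin 3 // (v : V) ∈ S i} = c (v : V) := by
      intro v; rw [Fintype.card_subtype, hc]
    rw [Finset.prod_congr rfl (fun v _ => h1 v)]
    exact Finset.prod_coe_sort F c
  obtain ⟨n, hn⟩ : ∃ n,
      (Finset.univ.filter (fun φ : F → Fin 3 => ∀ v : F, (v : V) ∈ S (φ v))).card = n :=
    ⟨_, rfl⟩
  rw [hn] at e1
  rw [hn]
  clear hn
  rw [e1, ← Finset.prod_pow]
  obtain ⟨a, hadef⟩ : ∃ a, a = (F.filter (fun v => c v = 3)).card := ⟨_, rfl⟩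
  obtain ⟨b, hbdef⟩ : ∃ b, b = (F.filter (fun v => c v = 2)).card := ⟨_, rfl⟩
  -- the product is at most 9^a * 4^b
  have e2 : ∏ v ∈ F, c v ^ 2 ≤ 9 ^ a * 4 ^ b := by
    have step : ∏ v ∈ F, c v ^ 2
        ≤ ∏ v ∈ F, (if c v = 3 then 9 else if c v = 2 then 4 else 1) := by
      apply Finset.prod_le_prod'
      intro v _
      have h3 := hc3 v
      have hcase : c v = 0 ∨ c v = 1 ∨ c v = 2 ∨ c v = 3 := by omega
      rcases hcase with h | h | h | h <;> simp [h]
    refine step.trans ?_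
    rw [← Finset.prod_filter_mul_prod_filter_not F (fun v => c v = 3)]
    have p1 : ∏ v ∈ F.filter (fun v => c v = 3),
        (if c v = 3 then 9 else if c v = 2 then 4 else 1) = 9 ^ a := by
      have hcg : ∀ v ∈ F.filter (fun v => c v = 3),
          (if c v = 3 then 9 else if c v = 2 then 4 else 1) = 9 := by
        intro v hv
        have := (Finset.mem_filter.mp hv).2
        simp [this]
      rw [Finset.prod_congr rfl hcg, Finset.prod_const, hadef]
    have p2 : ∏ v ∈ F.filter (fun v => ¬ c v = 3),
        (if c v = 3 then 9 else if c v = 2 then 4 else 1) ≤ 4 ^ b := by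
      rw [← Finset.prod_filter_mul_prod_filter_not (F.filter (fun v => ¬ c v = 3))
        (fun v => c v = 2)]
      have q1 : ∏ v ∈ (F.filter (fun v => ¬ c v = 3)).filter (fun v => c v = 2),
          (if c v = 3 then 9 else if c v = 2 then 4 else 1) = 4 ^ b := by
        rw [Finset.filter_filter]
        have hset : F.filter (fun v => ¬ c v = 3 ∧ c v = 2) = F.filter (fun v => c v = 2) := by
          apply Finset.filter_congr
          intro v _
          constructor
          · exact fun h => h.2
          · intro h
            exact ⟨by omega, h⟩
        rw [hset]
        have hcg : ∀ v ∈ F.filter (fun v => c v = 2),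
            (if c v = 3 then 9 else if c v = 2 then 4 else 1) = 4 := by
          intro v hv
          have h2 := (Finset.mem_filter.mp hv).2
          have : ¬ c v = 3 := by omega
          simp [this, h2]
        rw [Finset.prod_congr rfl hcg, Finset.prod_const, hbdef]
      have q2 : ∏ v ∈ (F.filter (fun v => ¬ c v = 3)).filter (fun v => ¬ c v = 2),
          (if c v = 3 then 9 else if c v = 2 then 4 else 1) = 1 := by
        apply Finset.prod_eq_one
        intro v hv
        simp only [Finset.mem_filter] at hv
        simp [hv.1.2, hv.2]
      rw [q1, q2, mul_one]
    rw [p1]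
    exact Nat.mul_le_mul_left _ p2
  refine e2.trans ?_
  -- a ≤ N'
  obtain ⟨i, j, hij⟩ := hne
  have ha : a ≤ N' := by
    have hsub : F.filter (fun v => c v = 3) ⊆ S i ∩ S j := by
      intro v hv
      have hv2 := (Finset.mem_filter.mp hv).2
      exact Finset.mem_inter.mpr ⟨hcmem v hv2 i, hcmem v hv2 j⟩
    rw [hadef]
    exact (Finset.card_le_card hsub).trans (hNint i j hij)
  -- a + b ≤ N0
  have hab : a + b ≤ N0 := by
    have hdisj : Disjoint (F.filter (fun v => c v = 3)) (F.filter (fun v => c v = 2)) := by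
      rw [Finset.disjoint_left]
      intro v h3 h2
      have e3 := (Finset.mem_filter.mp h3).2
      have e4 := (Finset.mem_filter.mp h2).2
      omega
    have hclT : G.IsClique ((F.filter (fun v => 2 ≤ c v) : Finset V) : Set V) := by
      intro v hv w hw hvw
      rw [Finset.mem_coe, Finset.mem_filter] at hv hw
      have hIv : 2 ≤ (Finset.univ.filter (fun i : Fin 3 => v ∈ S i)).card := by
        rw [← hc v]; exact hv.2
      have hIw : 2 ≤ (Finset.univ.filter (fun i : Fin 3 => w ∈ S i)).card := by
        rw [← hc w]; exact hw.2
      have hu : ((Finset.univ.filter (fun i : Fin 3 => v ∈ S i)) ∪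
          (Finset.univ.filter (fun i : Fin 3 => w ∈ S i))).card ≤ 3 := by
        calc _ ≤ (Finset.univ : Finset (Fin 3)).card :=
              Finset.card_le_card (Finset.subset_univ _)
        _ = 3 := by simp
      have hint := Finset.card_union_add_card_inter
        (Finset.univ.filter (fun i : Fin 3 => v ∈ S i))
        (Finset.univ.filter (fun i : Fin 3 => w ∈ S i))
      have hpos : 0 < ((Finset.univ.filter (fun i : Fin 3 => v ∈ S i)) ∩
          (Finset.univ.filter (fun i : Fin 3 => w ∈ S i))).card := by omega
      obtain ⟨k, hk⟩ := Finset.card_pos.mp hpos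
      rw [Finset.mem_inter, Finset.mem_filter, Finset.mem_filter] at hk
      exact hcl k hk.1.2 hk.2.2 hvw
    have hsubT : (F.filter (fun v => c v = 3)) ∪ (F.filter (fun v => c v = 2))
        ⊆ F.filter (fun v => 2 ≤ c v) := by
      intro v hv
      rw [Finset.mem_union, Finset.mem_filter, Finset.mem_filter] at hv
      rw [Finset.mem_filter]
      rcases hv with h | h
      · exact ⟨h.1, by omega⟩
      · exact ⟨h.1, by omega⟩
    calc a + b = ((F.filter (fun v => c v = 3)) ∪ (F.filter (fun v => c v = 2))).card := by
          rw [Finset.card_union_of_disjoint hdisj, hadef, hbdef]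
    _ ≤ (F.filter (fun v => 2 ≤ c v)).card := Finset.card_le_card hsubT
    _ ≤ N0 := hN0 _ hclT
  -- arithmetic: 9^a * 4^b ≤ 9^N' * 8^(N0 - N')
  calc 9 ^ a * 4 ^ b ≤ 9 ^ a * 4 ^ (N0 - a) :=
        Nat.mul_le_mul_left _ (Nat.pow_le_pow_right (by norm_num) (by omega))
  _ = 9 ^ a * (4 ^ (N' - a) * 4 ^ (N0 - N')) := by
      rw [← pow_add]
      have hexp : N0 - a = N' - a + (N0 - N') := by omega
      rw [hexp]
  _ ≤ 9 ^ a * (9 ^ (N' - a) * 8 ^ (N0 - N')) := by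
      apply Nat.mul_le_mul_left
      exact Nat.mul_le_mul (Nat.pow_le_pow_left (by norm_num) _)
        (Nat.pow_le_pow_left (by norm_num) _)
  _ = 9 ^ N' * 8 ^ (N0 - N') := by
      rw [← mul_assoc, ← pow_add]
      have hexp : a + (N' - a) = N' := by omega
      rw [hexp]


theorem stmt_0 {V : Type*} [Fintype V] [DecidableEq V] (G : SimpleGraph V)
    (N0 N1 N2 M : ℕ)
    -- `N0` is the maximum size of a clique of `G`
    (hN0ub : ∀ s : Finset V, G.IsClique (s : Set V) → s.card ≤ N0)
    (hN0ex : ∃ s : Finset V, G.IsClique (s : Set V) ∧ s.card = N0)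
    -- `N1` is the maximum size of a maximal clique that is not extremal
    (hN1 : ∀ s : Finset V,
      (G.IsClique (s : Set V) ∧
        ∀ u : Finset V, G.IsClique (u : Set V) → s ⊆ u → u = s) →
      s.card ≠ N0 → s.card ≤ N1)
    -- `N2` bounds the intersection of two distinct extremal cliques
    (hN2 : ∀ s u : Finset V, G.IsClique (s : Set V) → G.IsClique (u : Set V) →
      s.card = N0 → u.card = N0 → s ≠ u → (s ∩ u).card ≤ N2)
    -- `M` bounds the number of maximal cliques
    (hM : Nat.card {s : Finset V // G.IsClique (s : Set V) ∧
      ∀ u : Finset V, G.IsClique (u : Set V) → s ⊆ u → u = s} ≤ M)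
    (hineq : (N0 : ℝ) - max (N1 : ℝ) (N2 : ℝ)
        - 6 * Real.logb 2 M / (2 * Real.logb 2 3 - 3) > 0) :
    ∀ F : Finset V,
      admCount G 3 F ≤ 3 ^ N0 ∧
      (admCount G 3 F = 3 ^ N0 ↔ G.IsClique (F : Set V) ∧ F.card = N0) := by
  classical
  -- real-analytic preliminaries
  have e8 : Real.logb 2 8 = 3 := by
    rw [show (8 : ℝ) = 2 ^ (3 : ℕ) by norm_num, Real.logb_pow, Real.logb_self_eq_one]
      <;> norm_num
  have e9 : Real.logb 2 9 = 2 * Real.logb 2 3 := by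
    rw [show (9 : ℝ) = 3 ^ (2 : ℕ) by norm_num, Real.logb_pow]
    ring
  have hD : 0 < 2 * Real.logb 2 3 - 3 := by
    have h89 : Real.logb 2 8 < Real.logb 2 9 :=
      Real.logb_lt_logb (by norm_num) (by norm_num) (by norm_num)
    rw [e8, e9] at h89
    linarith
  have hlogM : 0 ≤ Real.logb 2 M := by
    rcases Nat.eq_zero_or_pos M with h | h
    · simp [h]
    · exact Real.logb_nonneg (by norm_num) (by exact_mod_cast h)
  have hcastmax : ((max N1 N2 : ℕ) : ℝ) = max (N1 : ℝ) (N2 : ℝ) := by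
    simp
  have hN'lt : max N1 N2 < N0 := by
    have h1 : 0 ≤ 6 * Real.logb 2 M / (2 * Real.logb 2 3 - 3) :=
      div_nonneg (by linarith) hD.le
    have h2 : ((max N1 N2 : ℕ) : ℝ) < N0 := by
      rw [hcastmax]
      linarith
    exact_mod_cast h2
  have hkey : 6 * Real.logb 2 M < ((N0 : ℝ) - (max N1 N2 : ℕ)) * (2 * Real.logb 2 3 - 3) := by
    have h2 : 6 * Real.logb 2 M / (2 * Real.logb 2 3 - 3) < (N0 : ℝ) - (max N1 N2 : ℕ) := by
      rw [hcastmax]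
      linarith
    calc 6 * Real.logb 2 M
        = 6 * Real.logb 2 M / (2 * Real.logb 2 3 - 3) * (2 * Real.logb 2 3 - 3) := by
          field_simp
    _ < ((N0 : ℝ) - (max N1 N2 : ℕ)) * (2 * Real.logb 2 3 - 3) := by
          exact mul_lt_mul_of_pos_right h2 hD
  intro F
  by_cases hFclique : G.IsClique (F : Set V)
  · -- F is a clique
    have hcount := admCount_of_clique G F hFclique
    have hcard : F.card ≤ N0 := hN0ub F hFclique
    rw [hcount]
    refine ⟨Nat.pow_le_pow_right (by norm_num) hcard, ?_, ?_⟩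
    · intro h
      exact ⟨hFclique, Nat.pow_right_injective (by norm_num) h⟩
    · rintro ⟨-, h⟩
      rw [h]
  · -- F is not a clique: strict inequality
    obtain ⟨MC, hMCmem, hMCcard⟩ : ∃ MC : Finset (Finset V),
        (∀ s : Finset V, s ∈ MC ↔ (G.IsClique (s : Set V) ∧
          ∀ u : Finset V, G.IsClique (u : Set V) → s ⊆ u → u = s)) ∧ MC.card ≤ M := by
      refine ⟨Finset.univ.filter (fun s : Finset V => G.IsClique (s : Set V) ∧
        ∀ u : Finset V, G.IsClique (u : Set V) → s ⊆ u → u = s), fun s => ?_, ?_⟩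
      · simp [Finset.mem_filter]
      · rw [Nat.card_eq_fintype_card, Fintype.card_subtype] at hM
        refine le_trans (le_of_eq ?_) hM
        congr!
    -- intersections of distinct maximal cliques are small
    have hint : ∀ s t : Finset V, s ∈ MC → t ∈ MC → s ≠ t →
        (s ∩ t).card ≤ max N1 N2 := by
      intro s t hs ht hst
      rw [hMCmem] at hs ht
      by_cases hsN : s.card = N0
      · by_cases htN : t.card = N0
        · exact le_trans (hN2 s t hs.1 ht.1 hsN htN hst) (le_max_right _ _)
        · calc (s ∩ t).card ≤ t.card := Finset.card_le_card Finset.inter_subset_right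
          _ ≤ N1 := hN1 t ht htN
          _ ≤ max N1 N2 := le_max_left _ _
      · calc (s ∩ t).card ≤ s.card := Finset.card_le_card Finset.inter_subset_left
        _ ≤ N1 := hN1 s hs hsN
        _ ≤ max N1 N2 := le_max_left _ _
    have hA : admCount G 3 F = (Finset.univ.filter (fun φ : F → Fin 3 =>
        ∀ c : Fin 3, G.IsClique {v : V | ∃ h : v ∈ F, φ ⟨v, h⟩ = c})).card := by
      rw [admCount, Nat.card_eq_fintype_card, Fintype.card_subtype]
    obtain ⟨B, hB⟩ : ∃ B : Finset V × Finset V × Finset V → Finset (F → Fin 3),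
        ∀ p, B p = Finset.univ.filter (fun φ : F → Fin 3 =>
          ∀ v : F, (v : V) ∈ ![p.1, p.2.1, p.2.2] (φ v)) := ⟨_, fun _ => rfl⟩
    -- every admissible colouring is covered by some triple of maximal cliques
    have hcover : (Finset.univ.filter (fun φ : F → Fin 3 =>
        ∀ c : Fin 3, G.IsClique {v : V | ∃ h : v ∈ F, φ ⟨v, h⟩ = c}))
        ⊆ (MC ×ˢ MC ×ˢ MC).biUnion B := by
      intro φ hφ
      rw [Finset.mem_filter] at hφ
      have hadm := hφ.2
      have hclass : ∀ i : Fin 3, G.IsClique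
          ((F.filter (fun v => ∃ h : v ∈ F, φ ⟨v, h⟩ = i) : Finset V) : Set V) := by
        intro i
        apply (hadm i).subset
        intro v hv
        rw [Finset.mem_coe, Finset.mem_filter] at hv
        exact hv.2
      choose σ hσ hσsub using fun i : Fin 3 => exists_maximal_containing G _ (hclass i)
      rw [Finset.mem_biUnion]
      refine ⟨(σ 0, σ 1, σ 2), ?_, ?_⟩
      · rw [Finset.mem_product, Finset.mem_product]
        exact ⟨(hMCmem _).mpr (hσ 0), (hMCmem _).mpr (hσ 1), (hMCmem _).mpr (hσ 2)⟩
      · rw [hB, Finset.mem_filter]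
        refine ⟨Finset.mem_univ _, fun v => ?_⟩
        have hmem : (v : V) ∈ F.filter (fun w => ∃ h : w ∈ F, φ ⟨w, h⟩ = φ v) := by
          rw [Finset.mem_filter]
          exact ⟨v.2, v.2, rfl⟩
        have hv2 := hσsub (φ v) hmem
        have hSf : ∀ i : Fin 3, (![σ 0, σ 1, σ 2] : Fin 3 → Finset V) i = σ i := by
          intro i; fin_cases i <;> rfl
        rw [show ((σ 0, σ 1, σ 2) : Finset V × Finset V × Finset V).1 = σ 0 from rfl]
        rw [show ((σ 0, σ 1, σ 2) : Finset V × Finset V × Finset V).2.1 = σ 1 from rfl]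
        rw [show ((σ 0, σ 1, σ 2) : Finset V × Finset V × Finset V).2.2 = σ 2 from rfl]
        rw [hSf (φ v)]
        exact hv2
    -- each triple contributes at most sqrt(9^N' * 8^(N0-N'))
    have hBbound : ∀ p ∈ MC ×ˢ MC ×ˢ MC,
        (B p).card ≤ Nat.sqrt (9 ^ (max N1 N2) * 8 ^ (N0 - max N1 N2)) := by
      intro p hp
      rw [Finset.mem_product, Finset.mem_product] at hp
      have hmem3 : ∀ i : Fin 3, (![p.1, p.2.1, p.2.2] : Fin 3 → Finset V) i ∈ MC := by
        intro i
        fin_cases i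
        · exact hp.1
        · exact hp.2.1
        · exact hp.2.2
      by_cases hc0 : p.1 = p.2.1 ∧ p.1 = p.2.2
      · -- constant triple is impossible since F is not a clique
        have hempty : B p = ∅ := by
          rw [Finset.eq_empty_iff_forall_notMem]
          intro φ hφ
          rw [hB, Finset.mem_filter] at hφ
          apply hFclique
          have hsub : F ⊆ p.1 := by
            intro v hv
            have h1 := hφ.2 ⟨v, hv⟩
            have hall : ∀ i : Fin 3, (![p.1, p.2.1, p.2.2] : Fin 3 → Finset V) i = p.1 := by
              intro i
              fin_cases i
              · rfl
              · exact hc0.1.symm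
              · exact hc0.2.symm
            rwa [hall (φ ⟨v, hv⟩)] at h1
          have hcl1 : G.IsClique ((p.1 : Finset V) : Set V) := ((hMCmem _).mp hp.1).1
          exact hcl1.subset (Finset.coe_subset.mpr hsub)
        rw [hempty]
        simp
      · -- nonconstant triple: apply the counting bound
        rw [Nat.le_sqrt']
        rw [hB]
        apply triple_bound G F N0 (max N1 N2) (![p.1, p.2.1, p.2.2])
        · intro i
          exact ((hMCmem _).mp (hmem3 i)).1
        · exact hN0ub
        · intro i j hij
          exact hint _ _ (hmem3 i) (hmem3 j) hij
        · by_cases h01 : p.1 = p.2.1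
          · refine ⟨0, 2, ?_⟩
            simp only [Matrix.cons_val_zero]
            show p.1 ≠ ![p.1, p.2.1, p.2.2] 2
            simpa using fun h => hc0 ⟨h01, h⟩
          · exact ⟨0, 1, by simpa using h01⟩
        · exact hN'lt.le
    -- put everything together
    have hchain : admCount G 3 F ≤
        M ^ 3 * Nat.sqrt (9 ^ (max N1 N2) * 8 ^ (N0 - max N1 N2)) := by
      rw [hA]
      calc (Finset.univ.filter (fun φ : F → Fin 3 =>
          ∀ c : Fin 3, G.IsClique {v : V | ∃ h : v ∈ F, φ ⟨v, h⟩ = c})).card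
          ≤ ((MC ×ˢ MC ×ˢ MC).biUnion B).card := Finset.card_le_card hcover
      _ ≤ ∑ p ∈ MC ×ˢ MC ×ˢ MC, (B p).card := Finset.card_biUnion_le
      _ ≤ (MC ×ˢ MC ×ˢ MC).card •
            Nat.sqrt (9 ^ (max N1 N2) * 8 ^ (N0 - max N1 N2)) :=
          Finset.sum_le_card_nsmul _ _ _ hBbound
      _ = (MC ×ˢ MC ×ˢ MC).card *
            Nat.sqrt (9 ^ (max N1 N2) * 8 ^ (N0 - max N1 N2)) := by rw [smul_eq_mul]
      _ ≤ M ^ 3 * Nat.sqrt (9 ^ (max N1 N2) * 8 ^ (N0 - max N1 N2)) := by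
          apply Nat.mul_le_mul_right
          rw [Finset.card_product, Finset.card_product]
          calc MC.card * (MC.card * MC.card) ≤ M * (M * M) :=
                Nat.mul_le_mul hMCcard (Nat.mul_le_mul hMCcard hMCcard)
          _ = M ^ 3 := by ring
    -- the strict numeric inequality
    have hRfinal : (M : ℝ) ^ 6 * ((9 : ℝ) ^ (max N1 N2) * (8 : ℝ) ^ (N0 - max N1 N2))
        < (9 : ℝ) ^ N0 := by
      by_cases hM0 : M = 0
      · rw [hM0]
        norm_num
      · have hM1 : (1 : ℝ) ≤ (M : ℝ) := by
          exact_mod_cast Nat.one_le_iff_ne_zero.mpr hM0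
        have hdcast : ((N0 - max N1 N2 : ℕ) : ℝ) = (N0 : ℝ) - ((max N1 N2 : ℕ) : ℝ) := by
          rw [Nat.cast_sub hN'lt.le]
        have hsplit : (9 : ℝ) ^ N0 = (9 : ℝ) ^ (max N1 N2) * (9 : ℝ) ^ (N0 - max N1 N2) := by
          rw [← pow_add, Nat.add_sub_cancel' hN'lt.le]
        rw [hsplit]
        have h9pos : (0 : ℝ) < (9 : ℝ) ^ (max N1 N2) := by positivity
        rw [show (M : ℝ) ^ 6 * ((9 : ℝ) ^ (max N1 N2) * (8 : ℝ) ^ (N0 - max N1 N2))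
            = (9 : ℝ) ^ (max N1 N2) * ((M : ℝ) ^ 6 * (8 : ℝ) ^ (N0 - max N1 N2)) by ring]
        apply mul_lt_mul_of_pos_left _ h9pos
        have hx : (0 : ℝ) < (M : ℝ) ^ 6 * (8 : ℝ) ^ (N0 - max N1 N2) := by positivity
        have hy : (0 : ℝ) < (9 : ℝ) ^ (N0 - max N1 N2) := by positivity
        refine (Real.logb_lt_logb_iff (b := 2) (by norm_num) hx hy).mp ?_
        rw [Real.logb_mul (by positivity) (by positivity), Real.logb_pow, Real.logb_pow,
          Real.logb_pow, e8, e9]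
        have : 6 * Real.logb 2 M <
            ((N0 - max N1 N2 : ℕ) : ℝ) * (2 * Real.logb 2 3 - 3) := by
          rw [hdcast]
          exact hkey
        push_cast
        push_cast at this
        linarith
    have hfinal : M ^ 3 * Nat.sqrt (9 ^ (max N1 N2) * 8 ^ (N0 - max N1 N2)) < 3 ^ N0 := by
      by_contra hcon
      push_neg at hcon
      have h1 : (3 ^ N0) ^ 2 ≤
          (M ^ 3 * Nat.sqrt (9 ^ (max N1 N2) * 8 ^ (N0 - max N1 N2))) ^ 2 :=
        Nat.pow_le_pow_left hcon 2
      have h2 : (M ^ 3 * Nat.sqrt (9 ^ (max N1 N2) * 8 ^ (N0 - max N1 N2))) ^ 2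
          ≤ M ^ 6 * (9 ^ (max N1 N2) * 8 ^ (N0 - max N1 N2)) := by
        rw [mul_pow, ← pow_mul]
        exact Nat.mul_le_mul_left _ (Nat.sqrt_le' _)
      have h3 : (3 ^ N0) ^ 2 = 9 ^ N0 := by
        rw [← pow_mul, mul_comm, pow_mul]
        norm_num
      have h4 : (M ^ 6 * (9 ^ (max N1 N2) * 8 ^ (N0 - max N1 N2)) : ℕ) < (9 ^ N0 : ℕ) := by
        have := hRfinal
        have hcast : ((M ^ 6 * (9 ^ (max N1 N2) * 8 ^ (N0 - max N1 N2)) : ℕ) : ℝ)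
            < ((9 ^ N0 : ℕ) : ℝ) := by
          push_cast
          exact hRfinal
        exact_mod_cast hcast
      have hcontr : (3 ^ N0) ^ 2 < (3 ^ N0) ^ 2 :=
        lt_of_le_of_lt (h1.trans h2) (by rw [h3]; exact h4)
      exact absurd hcontr (lt_irrefl _)
    have hlt : admCount G 3 F < 3 ^ N0 := lt_of_le_of_lt hchain hfinal
    refine ⟨hlt.le, ?_, ?_⟩
    · intro h
      rw [h] at hlt
      exact (lt_irrefl _ hlt).elim
    · rintro ⟨hcl, -⟩
      exact absurd hcl hFclique
end

section
/- Let r ≥ 0 be an integer and let OPT(r) be the maximum of ∏_{i=1}^s m_i over all integers 0 ≤ s ≤ r and all vectors (m_1, ..., m_s) of positive integers with ∑_{i=1}^s m_i = r. Then for every integer 0 ≤ s ≤ r and every vector (m_1, ..., m_s) of positive integers with ∑_{i=1}^s m_i = r, either ∏_{i=1}^s m_i = OPT(r) or ∏_{i=1}^s m_i ≤ (8/9)·OPT(r). -/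
/-!
The optimum is `maxProd r`, a product of `3`s times at most one `2` or `4`: a part `a ≥ 5` is
beaten by the two parts `3` and `a - 3`. Adding a part `a` to an optimal partition of `b` either
gives an optimal partition of `a + b` or loses a factor of at least `8 / 9`, the extreme case being
`2 · 4 = 8` against `3 · 3 = 9`. Since `a · maxProd b ≤ maxProd (a + b)`, a gap once opened by a
part survives all further parts, so induction over the parts proves the dichotomy.
-/

/-- The set of feasible objective values of the problem `MAX(r)`: products
`∏ m_i` over vectors `(m_1, ..., m_s)` of positive integers with `0 ≤ s ≤ r` and
`∑ m_i = r`. -/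
def feasibleProds (r : ℕ) : Set ℕ :=
  {P : ℕ | ∃ (s : ℕ) (m : Fin s → ℕ), s ≤ r ∧ (∀ i, 0 < m i) ∧
    (∑ i, m i) = r ∧ (∏ i, m i) = P}

def maxProd : ℕ → ℕ
  | 0 => 1
  | 1 => 1
  | 2 => 2
  | 3 => 3
  | 4 => 4
  | n + 5 => 3 * maxProd (n + 2)

@[simp]
lemma maxProd_add_five (n : ℕ) : maxProd (n + 5) = 3 * maxProd (n + 2) := rfl

lemma maxProd_add_add_five (a n : ℕ) : maxProd (a + (n + 5)) = 3 * maxProd (a + (n + 2)) := rfl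

lemma mul_maxProd_eq_or_nine_mul_le_of_le_four {a : ℕ} (ha₀ : 1 ≤ a) (ha₄ : a ≤ 4) :
    ∀ b, a * maxProd b = maxProd (a + b) ∨ 9 * (a * maxProd b) ≤ 8 * maxProd (a + b)
  | 0 | 1 | 2 | 3 | 4 => by interval_cases a <;> decide
  | b + 5 => by
    rw [maxProd_add_five, maxProd_add_add_five]
    rcases mul_maxProd_eq_or_nine_mul_le_of_le_four ha₀ ha₄ (b + 2) with h | h
    · left; rw [← h]; ring
    · right; linarith

lemma mul_maxProd_le (a b : ℕ) : a * maxProd b ≤ maxProd (a + b) := by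
  induction a using Nat.strong_induction_on with
  | _ a ih =>
    rcases Nat.lt_or_ge a 5 with ha | ha
    · rcases Nat.eq_zero_or_pos a with rfl | ha₀
      · simp
      · rcases mul_maxProd_eq_or_nine_mul_le_of_le_four ha₀ (by omega) b with h | h <;> omega
    · obtain ⟨c, rfl⟩ : ∃ c, a = c + 5 := ⟨a - 5, by omega⟩
      have hc := ih (c + 2) (by omega)
      rw [show c + 5 + b = (c + b) + 5 by ring, maxProd_add_five,
        show c + b + 2 = (c + 2) + b by ring]
      nlinarith [Nat.zero_le (maxProd b)]

lemma mul_maxProd_eq_or_nine_mul_le {a : ℕ} (ha : 1 ≤ a) (b : ℕ) :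
    a * maxProd b = maxProd (a + b) ∨ 9 * (a * maxProd b) ≤ 8 * maxProd (a + b) := by
  rcases Nat.lt_or_ge a 5 with ha₄ | ha₅
  · exact mul_maxProd_eq_or_nine_mul_le_of_le_four ha (by omega) b
  · right
    obtain ⟨c, rfl⟩ : ∃ c, a = c + 5 := ⟨a - 5, by omega⟩
    have hc := mul_maxProd_le (c + 2) b
    rw [show c + 5 + b = (c + b) + 5 by ring, maxProd_add_five,
      show c + b + 2 = (c + 2) + b by ring]
    nlinarith [Nat.zero_le (maxProd b)]

lemma prod_eq_maxProd_or_nine_mul_le (l : List ℕ) (hl : ∀ x ∈ l, 0 < x) :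
    l.prod = maxProd l.sum ∨ 9 * l.prod ≤ 8 * maxProd l.sum := by
  induction l with
  | nil => simp [maxProd]
  | cons a t ih =>
    simp only [List.forall_mem_cons] at hl
    rw [List.prod_cons, List.sum_cons]
    rcases ih hl.2 with h | h
    · rw [h]; exact mul_maxProd_eq_or_nine_mul_le hl.1 t.sum
    · right
      calc 9 * (a * t.prod) = a * (9 * t.prod) := by ring
        _ ≤ a * (8 * maxProd t.sum) := Nat.mul_le_mul_left a h
        _ = 8 * (a * maxProd t.sum) := by ring
        _ ≤ 8 * maxProd (a + t.sum) := Nat.mul_le_mul_left 8 (mul_maxProd_le a t.sum)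

lemma prod_le_maxProd (l : List ℕ) (hl : ∀ x ∈ l, 0 < x) : l.prod ≤ maxProd l.sum := by
  rcases prod_eq_maxProd_or_nine_mul_le l hl with h | h <;> omega

lemma exists_list_prod_eq_maxProd :
    ∀ r, ∃ l : List ℕ, (∀ x ∈ l, 0 < x) ∧ l.sum = r ∧ l.prod = maxProd r
  | 0 => ⟨[], by simp [maxProd]⟩
  | 1 => ⟨[1], by simp [maxProd]⟩
  | 2 => ⟨[2], by simp [maxProd]⟩
  | 3 => ⟨[3], by simp [maxProd]⟩
  | 4 => ⟨[4], by simp [maxProd]⟩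
  | r + 5 => by
    obtain ⟨l, hpos, hsum, hprod⟩ := exists_list_prod_eq_maxProd (r + 2)
    exact ⟨3 :: l, by simpa using hpos, by simp [hsum]; omega, by simp [hprod]⟩

lemma mem_feasibleProds_iff {r P : ℕ} :
    P ∈ feasibleProds r ↔ ∃ l : List ℕ, (∀ x ∈ l, 0 < x) ∧ l.sum = r ∧ l.prod = P := by
  constructor
  · rintro ⟨s, m, -, hpos, hsum, hprod⟩
    exact ⟨List.ofFn m, by simpa [List.mem_ofFn] using hpos,
      by rw [List.sum_ofFn, hsum], by rw [List.prod_ofFn, hprod]⟩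
  · rintro ⟨l, hpos, rfl, rfl⟩
    refine ⟨l.length, l.get, List.length_le_sum_of_one_le l hpos, fun i => hpos _ (l.get_mem i),
      ?_, ?_⟩
    · rw [← List.sum_ofFn, List.ofFn_get]
    · rw [← List.prod_ofFn, List.ofFn_get]

lemma isGreatest_feasibleProds (r : ℕ) : IsGreatest (feasibleProds r) (maxProd r) := by
  refine ⟨?_, ?_⟩
  · exact mem_feasibleProds_iff.2 (exists_list_prod_eq_maxProd r)
  · rintro P hP
    obtain ⟨l, hpos, rfl, rfl⟩ := mem_feasibleProds_iff.1 hP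
    exact prod_le_maxProd l hpos

theorem stmt_5 (r OPT : ℕ) (hOPT : IsGreatest (feasibleProds r) OPT) :
    ∀ (s : ℕ) (m : Fin s → ℕ), s ≤ r → (∀ i, 0 < m i) → (∑ i, m i) = r →
      (∏ i, m i) = OPT ∨ ((∏ i, m i : ℝ) ≤ 8 / 9 * (OPT : ℝ)) := by
  obtain rfl : OPT = maxProd r := hOPT.unique (isGreatest_feasibleProds r)
  intro s m _ hpos hsum
  have hgap := prod_eq_maxProd_or_nine_mul_le (List.ofFn m) (by simpa [List.mem_ofFn] using hpos)
  rw [List.sum_ofFn, List.prod_ofFn, hsum] at hgap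
  refine hgap.imp id fun h => ?_
  have h' : (9 : ℝ) * (∏ i, m i : ℕ) ≤ 8 * maxProd r := by exact_mod_cast h
  push_cast at h'
  linarith
end

section
/- Let G be a simple graph on a finite vertex set, r ≥ 1 an integer, s = ⌈r/3⌉, N_0 the maximum clique size, and N_2 an upper bound on the size of the intersection of any two distinct cliques of size N_0. Suppose I_1, ..., I_s are s distinct cliques of size N_0 and let F = I_1 ∪ ... ∪ I_s. Then the number of admissible r-colourings of F is at least OPT(r)^{N_0 - (s-1)·N_2}. -/
def fOPT : ℕ → ℕ
  | 0 => 1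
  | 1 => 1
  | 2 => 2
  | 3 => 3
  | 4 => 4
  | (n+5) => 3 * fOPT (n+2)

lemma fOPT_rec (n : ℕ) (h : 2 ≤ n) : fOPT (n+3) = 3 * fOPT n := by
  obtain ⟨k, rfl⟩ : ∃ k, n = k+2 := ⟨n-2, by omega⟩
  rfl

lemma fOPT_pos : ∀ n, 0 < fOPT n := by
  intro n
  induction n using Nat.strong_induction_on with
  | _ n ih =>
    rcases n with _|_|_|_|_|n
    ·simp [fOPT]
    · simp [fOPT]
    · simp [fOPT]
    · simp [fOPT]
    · simp [fOPT]
    · have := ih (n+2) (by omega)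
      simp [fOPT]; omega

lemma fOPT_mono : ∀ n, fOPT n ≤ fOPT (n+1) := by
  intro n
  induction n using Nat.strong_induction_on with
  | _ n ih =>
    rcases n with _|_|_|_|_|n
    · simp [fOPT]
    · simp [fOPT]
    · simp [fOPT]
    · simp [fOPT]
    · show fOPT 4 ≤ fOPT 5; simp [fOPT]
    · show fOPT (n+5) ≤ fOPT (n+6)
      rw [show n+5 = (n+2)+3 from by omega, fOPT_rec (n+2) (by omega),
        show n+6 = (n+3)+3 from by omega, fOPT_rec (n+3) (by omega)]
      have := ih (n+2) (by omega)
      rw [show n+2+1 = n+3 from by omega] at this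
      omega

lemma fOPT_two_mul : ∀ b, 2 * fOPT b ≤ fOPT (b+2) := by
  intro b
  induction b using Nat.strong_induction_on with
  | _ b ih =>
    rcases b with _|_|_|_|_|b
    · simp [fOPT]
    · simp [fOPT]
    · show 2 * fOPT 2 ≤ fOPT 4; simp [fOPT]
    · show 2 * fOPT 3 ≤ fOPT 5; simp [fOPT]
    · show 2 * fOPT 4 ≤ fOPT 6
      rw [show (6:ℕ) = 3+3 from rfl, fOPT_rec 3 (by omega)]; simp [fOPT]
    · show 2 * fOPT (b+5) ≤ fOPT (b+5+2)
      rw [show b+5 = (b+2)+3 from by omega, fOPT_rec (b+2) (by omega),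
        show b+5+2 = (b+4)+3 from by omega, fOPT_rec (b+4) (by omega)]
      have := ih (b+2) (by omega)
      rw [show b+2+2 = b+4 from by omega] at this
      omega

lemma fOPT_four_mul : ∀ b, 4 * fOPT b ≤ fOPT (b+4) := by
  intro b
  induction b using Nat.strong_induction_on with
  | _ b ih =>
    rcases b with _|_|_|_|_|b
    · simp [fOPT]
    · show 4 * fOPT 1 ≤ fOPT 5; simp [fOPT]
    · show 4 * fOPT 2 ≤ fOPT 6
      rw [show (6:ℕ) = 3+3 from rfl, fOPT_rec 3 (by omega)]; simp [fOPT]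
    · show 4 * fOPT 3 ≤ fOPT 7
      rw [show (7:ℕ) = 4+3 from rfl, fOPT_rec 4 (by omega)]; simp [fOPT]
    · show 4 * fOPT 4 ≤ fOPT 8
      rw [show (8:ℕ) = 5+3 from rfl, fOPT_rec 5 (by omega)]; simp [fOPT]
    · show 4 * fOPT (b+5) ≤ fOPT (b+5+4)
      rw [show b+5 = (b+2)+3 from by omega, fOPT_rec (b+2) (by omega),
        show b+5+4 = (b+6)+3 from by omega, fOPT_rec (b+6) (by omega)]
      have := ih (b+2) (by omega)
      rw [show b+2+4 = b+6 from by omega] at this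
      omega

lemma fOPT_mul : ∀ a, 1 ≤ a → ∀ b, a * fOPT b ≤ fOPT (a+b) := by
  intro a
  induction a using Nat.strong_induction_on with
  | _ a ih =>
    intro ha b
    rcases a with _|_|_|_|_|a
    · omega
    · rw [show 1+b = b+1 from by omega]; simpa using fOPT_mono b
    · rw [show 2+b = b+2 from by omega]; simpa using fOPT_two_mul b
    · rcases b with _|_|b
      · simp [fOPT]
      · show 3 * fOPT 1 ≤ fOPT 4; simp [fOPT]
      · rw [show 3+(b+2) = (b+2)+3 from by omega, fOPT_rec (b+2) (by omega)]
    · rw [show 4+b = b+4 from by omega]; simpa using fOPT_four_mul b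
    · have h1 : (a+2) * fOPT b ≤ fOPT (a+2+b) := ih (a+2) (by omega) (by omega) b
      have h2 : fOPT (a+5+b) = 3 * fOPT (a+2+b) := by
        rw [show a+5+b = (a+2+b)+3 from by omega, fOPT_rec (a+2+b) (by omega)]
      have h3 : (a+5) * fOPT b ≤ 3 * ((a+2) * fOPT b) := by
        have := fOPT_pos b
        nlinarith
      calc (a+5) * fOPT b ≤ 3 * ((a+2) * fOPT b) := h3
        _ ≤ 3 * fOPT (a+2+b) := by omega
        _ = fOPT (a+5+b) := h2.symm

lemma fOPT_ub : ∀ (s : ℕ) (m : Fin s → ℕ), (∀ i, 0 < m i) → (∏ i, m i) ≤ fOPT (∑ i, m i) := by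
  intro s
  induction s with
  | zero => intro m _; simp [fOPT]
  | succ s ih =>
    intro m hm
    rw [Fin.prod_univ_succ, Fin.sum_univ_succ]
    calc m 0 * ∏ i : Fin s, m i.succ ≤ m 0 * fOPT (∑ i : Fin s, m i.succ) := by
          exact Nat.mul_le_mul_left _ (ih _ (fun i => hm i.succ))
      _ ≤ fOPT (m 0 + ∑ i : Fin s, m i.succ) := fOPT_mul _ (hm 0) _

lemma fOPT_partition : ∀ r, 1 ≤ r → ∃ m : Fin ((r+2)/3) → ℕ,
    (∀ i, 0 < m i) ∧ (∑ i, m i) = r ∧ (∏ i, m i) = fOPT r := by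
  intro r
  induction r using Nat.strong_induction_on with
  | _ r ih =>
    intro hr
    rcases r with _|_|_|_|_|r
    · omega
    · exact ⟨![1], by simp [fOPT]⟩
    · exact ⟨![2], by simp [fOPT]⟩
    · exact ⟨![3], by simp [fOPT]⟩
    · refine ⟨![2,2], fun i => by fin_cases i <;> simp, ?_, ?_⟩
      · simp
      · simp [fOPT]
    · obtain ⟨m', h1, h2, h3⟩ := ih (r+2) (by omega) (by omega)
      have hs : (r+5+2)/3 = (r+2+2)/3 + 1 := by omega
      rw [hs]
      refine ⟨Fin.cons 3 m', ?_, ?_, ?_⟩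
      · intro i
        refine Fin.cases ?_ ?_ i
        · simp
        · intro j; simp [h1 j]
      · rw [Fin.sum_cons, h2]; omega
      · rw [Fin.prod_cons, h3]
        show 3 * fOPT (r+2) = fOPT (r+5)
        rw [show r+5 = (r+2)+3 from by omega, fOPT_rec (r+2) (by omega)]



section Aux
variable {V : Type*} [Fintype V] [DecidableEq V] {s : ℕ}

/-- vertices of `I k` in no other member of the family -/
def Sset (I : Fin s → Finset V) (k : Fin s) : Finset V :=
  I k \ (Finset.univ.erase k).biUnion I

def off (m : Fin s → ℕ) (k : Fin s) : ℕ := ∑ j ∈ Finset.Iio k, m j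

lemma off_add_le (m : Fin s → ℕ) (k : Fin s) : off m k + m k ≤ ∑ i, m i := by
  have h : Finset.Iio k ∪ {k} ⊆ Finset.univ := Finset.subset_univ _
  have hd : k ∉ Finset.Iio k := by simp
  calc off m k + m k = ∑ j ∈ insert k (Finset.Iio k), m j := by
        simp only [off, Finset.sum_insert hd]; omega
    _ ≤ ∑ i, m i := Finset.sum_le_sum_of_subset (Finset.subset_univ _)

lemma off_le_of_lt (m : Fin s → ℕ) {k k' : Fin s} (h : k < k') : off m k + m k ≤ off m k' := by
  have hd : k ∉ Finset.Iio k := by simp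
  have hsub : insert k (Finset.Iio k) ⊆ Finset.Iio k' := by
    intro j hj
    simp only [Finset.mem_insert, Finset.mem_Iio] at hj ⊢
    rcases hj with rfl | hj
    · exact h
    · exact hj.trans h
  calc off m k + m k = ∑ j ∈ insert k (Finset.Iio k), m j := by
        simp only [off, Finset.sum_insert hd]; omega
    _ ≤ off m k' := Finset.sum_le_sum_of_subset hsub

lemma off_eq_of_mem (m : Fin s → ℕ) {k k' : Fin s} {c : ℕ}
    (h1 : off m k ≤ c) (h2 : c < off m k + m k)
    (h3 : off m k' ≤ c) (h4 : c < off m k' + m k') : k = k' := by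
  rcases lt_trichotomy k k' with h | h | h
  · have := off_le_of_lt m h; omega
  · exact h
  · have := off_le_of_lt m h; omega

/-- minimal index of a clique containing `v` -/
def Kidx (I : Fin s → Finset V) (v : V) (h : ∃ j, v ∈ I j) : Fin s :=
  (Finset.univ.filter fun j => v ∈ I j).min'
    (by obtain ⟨j, hj⟩ := h; exact ⟨j, by simp [hj]⟩)

lemma Kidx_mem (I : Fin s → Finset V) (v : V) (h : ∃ j, v ∈ I j) : v ∈ I (Kidx I v h) := by
  have := Finset.min'_mem (Finset.univ.filter fun j => v ∈ I j)
    (by obtain ⟨j, hj⟩ := h; exact ⟨j, by simp [hj]⟩)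
  simpa [Kidx] using this

lemma Kidx_eq_of_S {I : Fin s → Finset V} {v : V} {k : Fin s} (hv : v ∈ Sset I k)
    (h : ∃ j, v ∈ I j) : Kidx I v h = k := by
  by_contra hne
  have hm := Kidx_mem I v h
  have : v ∈ (Finset.univ.erase k).biUnion I :=
    Finset.mem_biUnion.mpr ⟨Kidx I v h, Finset.mem_erase.mpr ⟨hne, Finset.mem_univ _⟩, hm⟩
  exact (Finset.mem_sdiff.mp hv).2 this

lemma Sset_subset {I : Fin s → Finset V} (k : Fin s) : Sset I k ⊆ I k :=
  Finset.sdiff_subset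

lemma card_Sset {N0 N2 : ℕ} {I : Fin s → Finset V} (hI : Function.Injective I)
    (hcard : ∀ i, (I i).card = N0)
    (hN2 : ∀ i j, i ≠ j → (I i ∩ I j).card ≤ N2) (k : Fin s) :
    N0 - (s - 1) * N2 ≤ (Sset I k).card := by
  have hsub : I k ⊆ Sset I k ∪ (I k ∩ (Finset.univ.erase k).biUnion I) := by
    intro v hv
    by_cases h : v ∈ (Finset.univ.erase k).biUnion I
    · exact Finset.mem_union_right _ (Finset.mem_inter.mpr ⟨hv, h⟩)
    · exact Finset.mem_union_left _ (Finset.mem_sdiff.mpr ⟨hv, h⟩)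
  have h1 : (I k).card ≤ (Sset I k).card + (I k ∩ (Finset.univ.erase k).biUnion I).card :=
    le_trans (Finset.card_le_card hsub) (Finset.card_union_le _ _)
  have h2 : (I k ∩ (Finset.univ.erase k).biUnion I).card ≤ (s - 1) * N2 := by
    have : I k ∩ (Finset.univ.erase k).biUnion I
        = (Finset.univ.erase k).biUnion (fun j => I k ∩ I j) := by
      ext v; simp [Finset.mem_biUnion, and_assoc]
      tauto
    rw [this]
    calc ((Finset.univ.erase k).biUnion fun j => I k ∩ I j).card
        ≤ ∑ j ∈ Finset.univ.erase k, (I k ∩ I j).card := Finset.card_biUnion_le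
      _ ≤ ∑ _j ∈ Finset.univ.erase k, N2 := by
          refine Finset.sum_le_sum ?_
          intro j hj
          exact hN2 k j (fun h => (Finset.mem_erase.mp hj).1 h.symm)
      _ = (s - 1) * N2 := by
          rw [Finset.sum_const, smul_eq_mul]
          congr 1
          rw [Finset.card_erase_of_mem (Finset.mem_univ _)]
          simp
  have := hcard k
  omega

end Aux

section Count
variable {V : Type*} [Fintype V] [DecidableEq V]

lemma count_lower (G : SimpleGraph V) (r N0 N2 : ℕ) {s : ℕ}
    (m : Fin s → ℕ) (hpos : ∀ i, 0 < m i) (hsum : ∑ i, m i = r)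
    (I : Fin s → Finset V) (hI : Function.Injective I)
    (hIcl : ∀ i, G.IsClique (I i : Set V) ∧ (I i).card = N0)
    (hN2 : ∀ i j, i ≠ j → (I i ∩ I j).card ≤ N2) :
    (∏ i, m i) ^ (N0 - (s - 1) * N2) ≤ admCount G r (Finset.univ.biUnion I) := by
  classical
  set F := Finset.univ.biUnion I with hF
  have memEx : ∀ v : V, v ∈ F → ∃ j, v ∈ I j := by
    intro v hv
    obtain ⟨j, _, hj⟩ := Finset.mem_biUnion.mp hv
    exact ⟨j, hj⟩
  -- the coloring associated to a choice function
  have hval_lt : ∀ (ψ : ∀ k, ↥(Sset I k) → Fin (m k)) (v : V) (h : ∃ j, v ∈ I j),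
      (if hs : v ∈ Sset I (Kidx I v h) then ((ψ _ ⟨v, hs⟩ : Fin _) : ℕ) else 0)
        < m (Kidx I v h) := by
    intro ψ v h
    split
    · exact Fin.is_lt _
    · exact hpos _
  set val : (∀ k, ↥(Sset I k) → Fin (m k)) → (v : V) → (∃ j, v ∈ I j) → ℕ :=
    fun ψ v h => if hs : v ∈ Sset I (Kidx I v h) then ((ψ _ ⟨v, hs⟩ : Fin _) : ℕ) else 0
    with hvaldef
  have hcol_lt : ∀ ψ v h, off m (Kidx I v h) + val ψ v h < r := by
    intro ψ v h
    have h1 := hval_lt ψ v h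
    have h2 := off_add_le m (Kidx I v h)
    rw [hsum] at h2
    simp only [hvaldef]
    omega
  set Φ : (∀ k, ↥(Sset I k) → Fin (m k)) →
      {φ : F → Fin r // ∀ c : Fin r, G.IsClique {v : V | ∃ h : v ∈ F, φ ⟨v, h⟩ = c}} :=
    fun ψ => ⟨fun x => ⟨off m (Kidx I x.1 (memEx x.1 x.2)) + val ψ x.1 (memEx x.1 x.2),
        hcol_lt ψ x.1 (memEx x.1 x.2)⟩, by
      intro c u hu w hw hne
      obtain ⟨hu', hcu⟩ := hu
      obtain ⟨hw', hcw⟩ := hw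
      have hcu' : off m (Kidx I u (memEx u hu')) + val ψ u (memEx u hu') = (c : ℕ) :=
        congrArg Fin.val hcu
      have hcw' : off m (Kidx I w (memEx w hw')) + val ψ w (memEx w hw') = (c : ℕ) :=
        congrArg Fin.val hcw
      have hvu : val ψ u (memEx u hu') < m (Kidx I u (memEx u hu')) := hval_lt ψ u _
      have hvw : val ψ w (memEx w hw') < m (Kidx I w (memEx w hw')) := hval_lt ψ w _
      have hkk : Kidx I u (memEx u hu') = Kidx I w (memEx w hw') := by
        refine off_eq_of_mem (c := (c : ℕ)) m ?_ ?_ ?_ ?_ <;> omega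
      have hmu : u ∈ I (Kidx I u (memEx u hu')) := Kidx_mem I u (memEx u hu')
      have hmw : w ∈ I (Kidx I u (memEx u hu')) := hkk ▸ Kidx_mem I w (memEx w hw')
      exact (hIcl _).1 (by exact_mod_cast hmu) (by exact_mod_cast hmw) hne⟩
    with hΦdef
  have hΦinj : Function.Injective Φ := by
    intro ψ ψ' h
    funext k x
    obtain ⟨v, hvS⟩ := x
    have hvF : v ∈ F := Finset.mem_biUnion.mpr ⟨k, Finset.mem_univ _, Sset_subset k hvS⟩
    have heq : (Φ ψ).1 ⟨v, hvF⟩ = (Φ ψ').1 ⟨v, hvF⟩ := by rw [h]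
    have heq' : off m (Kidx I v (memEx v hvF)) + val ψ v (memEx v hvF)
        = off m (Kidx I v (memEx v hvF)) + val ψ' v (memEx v hvF) := by
      simpa [hΦdef, Fin.ext_iff] using heq
    have hveq : val ψ v (memEx v hvF) = val ψ' v (memEx v hvF) := by omega
    have hk : Kidx I v (memEx v hvF) = k := Kidx_eq_of_S hvS _
    subst hk
    have h1 : val ψ v (memEx v hvF) = ((ψ _ ⟨v, hvS⟩ : Fin _) : ℕ) := by
      simp only [hvaldef, dif_pos hvS]
    have h2 : val ψ' v (memEx v hvF) = ((ψ' _ ⟨v, hvS⟩ : Fin _) : ℕ) := by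
      simp only [hvaldef, dif_pos hvS]
    rw [h1, h2] at hveq
    exact Fin.ext hveq
  have hcard : (∏ i, m i) ^ (N0 - (s - 1) * N2)
      ≤ Nat.card (∀ k, ↥(Sset I k) → Fin (m k)) := by
    rw [Nat.card_eq_fintype_card, Fintype.card_pi]
    have : ∀ k : Fin s, Fintype.card (↥(Sset I k) → Fin (m k))
        = (m k) ^ (Sset I k).card := by
      intro k
      rw [Fintype.card_fun]
      simp
    calc (∏ i, m i) ^ (N0 - (s - 1) * N2) = ∏ i, (m i) ^ (N0 - (s - 1) * N2) := by
          rw [Finset.prod_pow]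
      _ ≤ ∏ k, (m k) ^ (Sset I k).card := by
          refine Finset.prod_le_prod (fun _ _ => Nat.zero_le _) ?_
          intro k _
          exact Nat.pow_le_pow_right (hpos k)
            (card_Sset hI (fun i => (hIcl i).2) hN2 k)
      _ = ∏ k, Fintype.card (↥(Sset I k) → Fin (m k)) := by
          exact Finset.prod_congr rfl fun k _ => (this k).symm
  calc (∏ i, m i) ^ (N0 - (s - 1) * N2)
      ≤ Nat.card (∀ k, ↥(Sset I k) → Fin (m k)) := hcard
    _ ≤ admCount G r F := Nat.card_le_card_of_injective Φ hΦinj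

end Count

theorem stmt_9 {V : Type*} [Fintype V] [DecidableEq V] (G : SimpleGraph V)
    (r N0 N2 OPT : ℕ) (hr : 1 ≤ r)
    -- `N0` is the maximum size of a clique of `G`
    (hN0ub : ∀ s : Finset V, G.IsClique (s : Set V) → s.card ≤ N0)
    (hN0ex : ∃ s : Finset V, G.IsClique (s : Set V) ∧ s.card = N0)
    -- `N2` bounds the intersection of two distinct cliques of size `N0`
    (hN2 : ∀ s u : Finset V, G.IsClique (s : Set V) → G.IsClique (u : Set V) →
      s.card = N0 → u.card = N0 → s ≠ u → (s ∩ u).card ≤ N2)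
    -- `OPT` is the optimal value of `MAX(r)`
    (hOPT : IsGreatest (feasibleProds r) OPT)
    -- `I` is a family of `⌈r/3⌉` distinct extremal cliques
    (I : Fin ((r + 2) / 3) → Finset V) (hI : Function.Injective I)
    (hIcl : ∀ i, G.IsClique (I i : Set V) ∧ (I i).card = N0) :
    OPT ^ (N0 - ((r + 2) / 3 - 1) * N2) ≤ admCount G r (Finset.univ.biUnion I) := by
  obtain ⟨m, hmpos, hmsum, hmprod⟩ := fOPT_partition r hr
  have hOPTeq : OPT = fOPT r := by
    apply le_antisymm
    · obtain ⟨t, m', ht, hpos', hsum', hprod'⟩ := hOPT.1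
      rw [← hprod', ← hsum']
      exact fOPT_ub t m' hpos'
    · exact hOPT.2 ⟨(r+2)/3, m, by omega, hmpos, hmsum, hmprod⟩
  rw [hOPTeq, ← hmprod]
  exact count_lower G r N0 N2 m hmpos hmsum I hI hIcl
    (fun i j hij => hN2 _ _ (hIcl i).1 (hIcl j).1 (hIcl i).2 (hIcl j).2
      (fun h => hij (hI h)))
end

section
/- For every K > 0 there exists C = C(K) such that for all integers r ≥ 4 and k > t ≥ 1 and all n ≥ C·r²·k·(k-t), the following inequality holds (logarithms base 2, C(a,b) denoting binomial coefficients): (lg 9 - 3)·C(n-t, k-t) - r·(k+1)·C(n-t-1, k-t-1) - (r²·lg 3 / 9)·C(n-t-1, k-t-1) - r·C(2(k-t)+1, k-t)·lg C(n, k) ≥ K. -/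
open Real

theorem aux_pow_le_fac : ∀ k : ℕ, (k:ℝ)^k ≤ 3^k * (Nat.factorial k) := by
  intro k
  induction k with
  | zero => simp
  | succ k ih =>
    rcases Nat.eq_zero_or_pos k with hk | hk
    · subst hk; norm_num
    · have hkpos : (0:ℝ) < k := by exact_mod_cast hk
      have h1 : ((k:ℝ)+1)/k ≤ Real.exp (1/k) := by
        have h := Real.add_one_le_exp (1/(k:ℝ))
        have : ((k:ℝ)+1)/k = 1/k + 1 := by field_simp; ring
        linarith [this.le.trans h]
      have h2 : (((k:ℝ)+1)/k)^k ≤ Real.exp 1 := by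
        calc (((k:ℝ)+1)/k)^k ≤ (Real.exp (1/k))^k := by
              apply pow_le_pow_left₀ (by positivity) h1
          _ = Real.exp ((k:ℕ) * (1/(k:ℝ))) := (Real.exp_nat_mul _ _).symm
          _ = Real.exp 1 := by rw [mul_one_div, div_self (ne_of_gt hkpos)]
      have h3 : ((k:ℝ)+1)^k ≤ 3 * (k:ℝ)^k := by
        have he : Real.exp 1 ≤ 3 := by linarith [Real.exp_one_lt_d9]
        have hexp : ((k:ℝ)+1)^k = (((k:ℝ)+1)/k)^k * (k:ℝ)^k := by
          rw [← mul_pow]; congr 1; field_simp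
        calc ((k:ℝ)+1)^k = (((k:ℝ)+1)/k)^k * (k:ℝ)^k := hexp
          _ ≤ 3 * (k:ℝ)^k := by
              apply mul_le_mul_of_nonneg_right (h2.trans he) (by positivity)
      have hfac : ((Nat.factorial (k+1) : ℕ) : ℝ) = ((k:ℝ)+1) * Nat.factorial k := by
        rw [Nat.factorial_succ]; push_cast; ring
      push_cast
      calc ((k:ℝ)+1)^(k+1) = ((k:ℝ)+1) * ((k:ℝ)+1)^k := by ring
        _ ≤ ((k:ℝ)+1) * (3 * (k:ℝ)^k) := by
            apply mul_le_mul_of_nonneg_left h3 (by positivity)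
        _ ≤ ((k:ℝ)+1) * (3 * (3^k * Nat.factorial k)) := by
            apply mul_le_mul_of_nonneg_left (by linarith) (by positivity)
        _ = 3^(k+1) * (((k:ℝ)+1) * Nat.factorial k) := by ring
        _ = 3^(k+1) * ((k:ℝ)+1) * Nat.factorial k := by ring
        _ = 3^(k+1) * ((Nat.factorial (k+1) : ℕ) : ℝ) := by rw [hfac]; ring


theorem aux_le_16pow (p : ℕ) : (p:ℝ) + 1 ≤ 16^p := by
  have h : p + 1 ≤ 16^p := by
    induction p with
    | zero => norm_num
    | succ p ih =>
      have : 16^(p+1) = 16 * 16^p := by ring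
      omega
  exact_mod_cast h


theorem aux_log_le_two_sqrt (x : ℝ) (hx : 1 ≤ x) : Real.log x ≤ 2 * Real.sqrt x := by
  have h0 : (0:ℝ) ≤ x := by linarith
  have h1 : Real.log (Real.sqrt x) = Real.log x / 2 := Real.log_sqrt h0
  have h2 : Real.log (Real.sqrt x) ≤ Real.sqrt x - 1 :=
    Real.log_le_sub_one_of_pos (Real.sqrt_pos.mpr (by linarith))
  nlinarith [Real.sqrt_nonneg x]

theorem aux_logb_le (x : ℝ) (hx : 1 ≤ x) : Real.logb 2 x ≤ 3/2 * Real.log x := by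
  have hl2 : (0:ℝ) < Real.log 2 := Real.log_pos (by norm_num)
  have hl2' := Real.log_two_gt_d9
  have hlx : 0 ≤ Real.log x := Real.log_nonneg hx
  rw [Real.logb, div_le_iff₀ hl2]
  nlinarith

theorem aux_sqrt3 : Real.sqrt 3 ≤ 2 := by
  nlinarith [Real.sq_sqrt (show (0:ℝ) ≤ 3 by norm_num), Real.sqrt_nonneg 3]

set_option maxHeartbeats 2000000 in
theorem stmt_12 :
    ∀ K : ℝ, 0 < K → ∃ C : ℝ, ∀ r k t n : ℕ,
      4 ≤ r → 1 ≤ t → t < k →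
      C * (r : ℝ) ^ 2 * (k : ℝ) * ((k : ℝ) - (t : ℝ)) ≤ (n : ℝ) →
      K ≤ (Real.logb 2 9 - 3) * ((n - t).choose (k - t) : ℝ)
          - (r : ℝ) * ((k : ℝ) + 1) * ((n - t - 1).choose (k - t - 1) : ℝ)
          - ((r : ℝ) ^ 2 * Real.logb 2 3 / 9) * ((n - t - 1).choose (k - t - 1) : ℝ)
          - (r : ℝ) * ((2 * (k - t) + 1).choose (k - t) : ℝ)
              * Real.logb 2 (n.choose k : ℝ) := by
  intro K hK
  refine ⟨10^7 * (K + 1), ?_⟩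
  intro r k t n hr ht htk hn
  have hK1 : (1:ℝ) ≤ K + 1 := by linarith
  have hrR : (4:ℝ) ≤ (r:ℝ) := by exact_mod_cast hr
  have hr2 : (16:ℝ) ≤ (r:ℝ)^2 := by nlinarith
  have htR : (1:ℝ) ≤ (t:ℝ) := by exact_mod_cast ht
  have htkN : t ≤ k := htk.le
  have htkR : (t:ℝ) < (k:ℝ) := by exact_mod_cast htk
  have hk2N : 2 ≤ k := by omega
  have hk2R : (2:ℝ) ≤ (k:ℝ) := by exact_mod_cast hk2N
  set m : ℕ := k - t with hm_def
  have hm1 : 1 ≤ m := by omega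
  obtain ⟨p, hp⟩ : ∃ p, m = p + 1 := ⟨m - 1, by omega⟩
  have hmR : (m:ℝ) = (k:ℝ) - (t:ℝ) := by
    rw [hm_def]; exact Nat.cast_sub htkN
  have hmR1 : (1:ℝ) ≤ (m:ℝ) := by exact_mod_cast hm1
  have hmk : (m:ℝ) ≤ (k:ℝ) := by rw [hmR]; linarith
  rw [← hmR] at hn
  have hr0 : (0:ℝ) < r := by linarith
  have hk0 : (0:ℝ) < k := by linarith
  have hm0 : (0:ℝ) < m := by linarith
  have hKpr : (0:ℝ) ≤ K * ((r:ℝ)^2 * (k:ℝ) * (m:ℝ)) := by positivity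
  have hnbig : 10^7 * (r:ℝ)^2 * k * m ≤ n := by linarith [hn, hKpr]
  have h16k : (16:ℝ) * (k:ℝ) * 1 ≤ (r:ℝ)^2 * (k:ℝ) * (m:ℝ) := by
    gcongr <;> linarith
  have h2kR : 2 * (k:ℝ) ≤ n := by linarith [hnbig, h16k, hk0.le]
  have hn0 : (0:ℝ) < n := by linarith
  have h2kN : 2 * k ≤ n := by exact_mod_cast h2kR
  have hkn : k ≤ n := by omega
  have htn : t ≤ n := by omega
  have hntR : ((n - t : ℕ) : ℝ) = (n:ℝ) - t := Nat.cast_sub htn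
  set A : ℝ := ((n - t).choose m : ℝ) with hA_def
  set B2 : ℝ := ((n - t - 1).choose (m - 1) : ℝ) with hB2_def
  set Bc : ℝ := (((2 * m + 1).choose m : ℕ) : ℝ) with hBc_def
  set L : ℝ := Real.logb 2 (n.choose k : ℝ) with hL_def
  set S : ℝ := (n:ℝ) / (2 * m) with hS_def
  have hA0 : (0:ℝ) ≤ A := Nat.cast_nonneg _
  have hB2nn : (0:ℝ) ≤ B2 := Nat.cast_nonneg _
  -- S lower bounds
  have hS_lb : 10^7 * (K+1) * (r:ℝ)^2 * k / 2 ≤ S := by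
    rw [hS_def, le_div_iff₀ (by positivity)]
    calc 10^7 * (K+1) * (r:ℝ)^2 * k / 2 * (2 * m) = 10^7 * (K+1) * (r:ℝ)^2 * k * m := by ring
      _ ≤ (n:ℝ) := hn
  have h32 : (32:ℝ) ≤ (r:ℝ)^2 * k := by nlinarith
  have hprod1 : (1:ℝ) * 32 ≤ (K+1) * ((r:ℝ)^2 * k) :=
    mul_le_mul hK1 h32 (by norm_num) (by linarith)
  have hprodK : K * 32 ≤ (K+1) * ((r:ℝ)^2 * k) :=
    mul_le_mul (by linarith) h32 (by norm_num) (by linarith)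
  have hS1 : (1:ℝ) ≤ S := by linarith
  have hSK : 30 * K ≤ S := by linarith
  have hS_r2k : 90 * ((r:ℝ)^2 * k) ≤ S := by
    have h1 : (0:ℝ) ≤ K * ((r:ℝ)^2 * k) := by positivity
    linarith
  -- lower bound A ≥ S^m
  have hfac_pos : (0:ℝ) < (Nat.factorial m : ℝ) := by exact_mod_cast Nat.factorial_pos m
  have hfacle : ((Nat.factorial m : ℕ) : ℝ) ≤ (m:ℝ)^m := by exact_mod_cast Nat.factorial_le_pow m
  have e1 : ((n - t + 1 - m : ℕ) : ℝ) = (n:ℝ) - k + 1 := by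
    have h : n - t + 1 - m = n - k + 1 := by omega
    rw [h, Nat.cast_add, Nat.cast_sub hkn, Nat.cast_one]
  have e2 : (n:ℝ)/2 ≤ (n:ℝ) - k + 1 := by linarith
  have hA_lb : S^m ≤ A := by
    have hSalt : S = ((n:ℝ)/2)/(m:ℝ) := by rw [hS_def, div_div]
    have hp1 := Nat.pow_le_choose (α := ℝ) m (n - t)
    calc S^m = ((n:ℝ)/2)^m / ((m:ℝ)^m) := by rw [hSalt, div_pow]
      _ ≤ ((n:ℝ)/2)^m / (Nat.factorial m : ℝ) := by
          apply div_le_div_of_nonneg_left (by positivity) hfac_pos hfacle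
      _ ≤ ((n:ℝ) - k + 1)^m / (Nat.factorial m : ℝ) := by
          gcongr <;> linarith
      _ = (((n - t + 1 - m : ℕ) : ℝ))^m / (Nat.factorial m : ℝ) := by rw [e1]
      _ ≤ A := hp1
  have hSm_lb : S ≤ S^m := le_self_pow₀ hS1 (by omega)
  -- Claim 1
  have claim1 : K ≤ 1/30 * A := by linarith
  -- identity m * A = (n - t) * B2
  have hid : (m:ℝ) * A = ((n:ℝ) - (t:ℝ)) * B2 := by
    have h1 : n - t - 1 + 1 = n - t := by omega
    have h2 : m - 1 + 1 = m := by omega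
    have hNat := Nat.add_one_mul_choose_eq (n - t - 1) (m - 1)
    simp only [Nat.succ_eq_add_one, h1, h2] at hNat
    -- hNat : (n - t) * (n - t - 1).choose (m - 1) = (n - t).choose m * m
    have hcast := congrArg (fun x : ℕ => (x:ℝ)) hNat
    push_cast at hcast
    rw [hntR] at hcast
    rw [hA_def, hB2_def]
    linarith [hcast]
  have hASB : S * B2 ≤ A := by
    have hhalf : (n:ℝ)/2 ≤ (n:ℝ) - t := by linarith
    have h1 : ((n:ℝ)/2) * B2 ≤ ((n:ℝ) - t) * B2 := mul_le_mul_of_nonneg_right hhalf hB2nn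
    have hSm : S * (m:ℝ) = (n:ℝ)/2 := by
      rw [hS_def]; field_simp
    have heq : (m:ℝ) * (S * B2) = ((n:ℝ)/2) * B2 := by rw [← hSm]; ring
    have h2 : (m:ℝ) * (S * B2) ≤ (m:ℝ) * A := by rw [heq, hid]; linarith
    exact le_of_mul_le_mul_left h2 hm0
  -- Claim 2
  have claim2 : (r:ℝ) * ((k:ℝ)+1) * B2 + ((r:ℝ)^2 * Real.logb 2 3 / 9) * B2 ≤ 1/30 * A := by
    have hlg3 : Real.logb 2 3 ≤ 2 := by
      have hl2 : (0:ℝ) < Real.log 2 := Real.log_pos (by norm_num)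
      have key : Real.log ((3:ℝ)^(1:ℕ)) ≤ Real.log ((2:ℝ)^(2:ℕ)) :=
        Real.log_le_log (by positivity) (by norm_num)
      rw [Real.log_pow, Real.log_pow] at key
      rw [Real.logb, div_le_iff₀ hl2]
      push_cast at key; linarith
    have hlg3nn : (0:ℝ) ≤ Real.logb 2 3 := Real.logb_nonneg (by norm_num) (by norm_num)
    have hrr : (r:ℝ) ≤ (r:ℝ)^2 := by
      have h := mul_le_mul_of_nonneg_left hrR hr0.le
      rw [pow_two]
      linarith [h]
    have hc1 : (r:ℝ) * ((k:ℝ)+1) ≤ 2 * ((r:ℝ)^2 * k) := by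
      have h1 : (r:ℝ) * ((k:ℝ)+1) ≤ (r:ℝ) * (2*k) := mul_le_mul_of_nonneg_left (by linarith) hr0.le
      have h2 : (r:ℝ) * k ≤ (r:ℝ)^2 * k := mul_le_mul_of_nonneg_right hrr hk0.le
      linarith
    have hc2 : (r:ℝ)^2 * Real.logb 2 3 / 9 ≤ (r:ℝ)^2 * k := by
      have h1 : (r:ℝ)^2 * Real.logb 2 3 ≤ (r:ℝ)^2 * 2 := mul_le_mul_of_nonneg_left hlg3 (by positivity)
      have h2 : (r:ℝ)^2 * 1 ≤ (r:ℝ)^2 * k := mul_le_mul_of_nonneg_left (by linarith) (by positivity)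
      linarith
    have hcsum : (r:ℝ) * ((k:ℝ)+1) + (r:ℝ)^2 * Real.logb 2 3 / 9 ≤ 3 * ((r:ℝ)^2 * k) := by linarith
    have hsum : (r:ℝ) * ((k:ℝ)+1) * B2 + ((r:ℝ)^2 * Real.logb 2 3 / 9) * B2
        ≤ (3 * ((r:ℝ)^2 * k)) * B2 := by
      have := mul_le_mul_of_nonneg_right hcsum hB2nn
      linarith [this]
    have h3 : (3 * ((r:ℝ)^2 * k)) * B2 ≤ (1/30 * S) * B2 := by
      apply mul_le_mul_of_nonneg_right _ hB2nn
      linarith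
    have h4 : (1/30 * S) * B2 ≤ 1/30 * A := by
      have h := hASB
      linarith [h]
    linarith
  -- Claim 3
  have claim3 : (r:ℝ) * Bc * L ≤ 1/30 * A := by
    have hBc4 : Bc ≤ (4:ℝ)^m := by
      rw [hBc_def]
      exact_mod_cast Nat.choose_middle_le_pow m
    have hchoose1 : (1:ℝ) ≤ ((n.choose k : ℕ) : ℝ) := by
      exact_mod_cast Nat.choose_pos hkn
    have hL0 : 0 ≤ L := Real.logb_nonneg (by norm_num) hchoose1
    have hkfac : (0:ℝ) < ((Nat.factorial k : ℕ) : ℝ) := by exact_mod_cast Nat.factorial_pos k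
    have hCub : ((n.choose k : ℕ) : ℝ) ≤ (3*(n:ℝ)/k)^k := by
      have h1 : ((n.choose k : ℕ) : ℝ) ≤ (n:ℝ)^k / ((Nat.factorial k : ℕ) : ℝ) := by
        have h := Nat.choose_le_pow_div (α := ℝ) k n
        calc ((n.choose k : ℕ) : ℝ) ≤ (((n:ℕ):ℝ))^k / ((Nat.factorial k : ℕ) : ℝ) := by
              exact_mod_cast h
          _ = (n:ℝ)^k / ((Nat.factorial k : ℕ) : ℝ) := by norm_cast
      have h2 : (n:ℝ)^k / ((Nat.factorial k : ℕ) : ℝ) ≤ 3^k * (n:ℝ)^k / (k:ℝ)^k := by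
        rw [div_le_div_iff₀ hkfac (by positivity)]
        have h3 := aux_pow_le_fac k
        calc (n:ℝ)^k * (k:ℝ)^k ≤ (n:ℝ)^k * (3^k * ((Nat.factorial k : ℕ) : ℝ)) :=
              mul_le_mul_of_nonneg_left h3 (by positivity)
          _ = 3^k * (n:ℝ)^k * ((Nat.factorial k : ℕ) : ℝ) := by ring
      have h4 : (3*(n:ℝ)/k)^k = 3^k * (n:ℝ)^k / (k:ℝ)^k := by
        rw [div_pow, mul_pow]
      rw [h4]; linarith
    have hknR : (k:ℝ) ≤ (n:ℝ) := by exact_mod_cast hkn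
    have h3nk1 : (1:ℝ) ≤ 3*(n:ℝ)/k := by
      rw [le_div_iff₀ hk0]; linarith
    have hL1 : L ≤ 3/2 * Real.log ((n.choose k : ℕ) : ℝ) := aux_logb_le _ hchoose1
    have hlog1 : Real.log ((n.choose k : ℕ) : ℝ) ≤ (k:ℝ) * Real.log (3*(n:ℝ)/k) := by
      calc Real.log ((n.choose k : ℕ) : ℝ) ≤ Real.log ((3*(n:ℝ)/k)^k) :=
            Real.log_le_log (by linarith) hCub
        _ = (k:ℝ) * Real.log (3*(n:ℝ)/k) := by rw [Real.log_pow]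
    have hlog2 : Real.log (3*(n:ℝ)/k) ≤ 2 * Real.sqrt (3*(n:ℝ)/k) := aux_log_le_two_sqrt _ h3nk1
    have hsq3 : Real.sqrt (3*(n:ℝ)/k) ≤ 2 * Real.sqrt ((n:ℝ)/k) := by
      have hrw : 3*(n:ℝ)/k = 3*((n:ℝ)/k) := by ring
      rw [hrw, Real.sqrt_mul (by norm_num : (0:ℝ) ≤ 3)]
      exact mul_le_mul_of_nonneg_right aux_sqrt3 (Real.sqrt_nonneg _)
    have hkd : (k:ℝ) * Real.sqrt ((n:ℝ)/k) = Real.sqrt k * Real.sqrt n := by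
      rw [Real.sqrt_div hn0.le (k:ℝ)]
      rw [show (k:ℝ) * (Real.sqrt n / Real.sqrt k) = ((k:ℝ)/Real.sqrt k) * Real.sqrt n from by ring,
          Real.div_sqrt]
    have hLub : L ≤ 6 * (Real.sqrt k * Real.sqrt n) := by
      have c1 : 3/2 * Real.log ((n.choose k : ℕ) : ℝ) ≤ 3/2 * ((k:ℝ) * Real.log (3*(n:ℝ)/k)) :=
        mul_le_mul_of_nonneg_left hlog1 (by norm_num)
      have c2 : (k:ℝ) * Real.log (3*(n:ℝ)/k) ≤ (k:ℝ) * (2*(2*Real.sqrt ((n:ℝ)/k))) := by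
        apply mul_le_mul_of_nonneg_left _ hk0.le
        linarith
      calc L ≤ 3/2 * Real.log ((n.choose k : ℕ) : ℝ) := hL1
        _ ≤ 3/2 * ((k:ℝ) * Real.log (3*(n:ℝ)/k)) := c1
        _ ≤ 3/2 * ((k:ℝ) * (2*(2*Real.sqrt ((n:ℝ)/k)))) := mul_le_mul_of_nonneg_left c2 (by norm_num)
        _ = 6 * ((k:ℝ) * Real.sqrt ((n:ℝ)/k)) := by ring
        _ = 6 * (Real.sqrt k * Real.sqrt n) := by rw [hkd]
    -- core power inequality
    have hmp : (m:ℝ) = (p:ℝ) + 1 := by rw [hp]; push_cast; ring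
    have b1 : (m:ℝ) ≤ ((10:ℝ)^7/8)^(2*p) := by
      have h16 := aux_le_16pow p
      have hb : (16:ℝ)^p ≤ (((10:ℝ)^7/8)^2)^p := by
        apply pow_le_pow_left₀ (by norm_num) (by norm_num)
      rw [pow_mul, hmp]
      linarith
    have hX0nn : (0:ℝ) ≤ 10^7*(r:ℝ)^2*(k:ℝ)*(m:ℝ) := by positivity
    have step1 : (10^7*(r:ℝ)^2*(k:ℝ)*(m:ℝ))^(2*p+1) ≤ (n:ℝ)^(2*p+1) :=
      pow_le_pow_left₀ hX0nn hnbig _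
    have hm7 : 10^7*(m:ℝ) ≤ 10^7*(r:ℝ)^2*(k:ℝ)*(m:ℝ) := by
      have h := mul_le_mul_of_nonneg_right (show (1:ℝ) ≤ (r:ℝ)^2*(k:ℝ) by linarith [h32]) hm0.le
      linarith [h]
    have step2 : (10^7*(m:ℝ))^(2*p) ≤ (10^7*(r:ℝ)^2*(k:ℝ)*(m:ℝ))^(2*p) :=
      pow_le_pow_left₀ (by positivity) hm7 _
    have step3 : (10^7*(m:ℝ))^(2*p) = ((10:ℝ)^7/8)^(2*p) * (8*(m:ℝ))^(2*p) := by
      rw [← mul_pow]; congr 1; ring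
    have core' : 32400*(r:ℝ)^2*(8*(m:ℝ))^(2*m)*(k:ℝ) ≤ (n:ℝ)^(2*p+1) := by
      have expand : (8*(m:ℝ))^(2*m) = (8*(m:ℝ))^(2*p)*(8*(m:ℝ))^2 := by
        rw [← pow_add]; congr 1; omega
      have hfactnn : (0:ℝ) ≤ (8*(m:ℝ))^(2*p) * ((r:ℝ)^2*(k:ℝ)) := by positivity
      have lhs_eq : 32400*(r:ℝ)^2*(8*(m:ℝ))^(2*m)*(k:ℝ)
          = (2073600*(m:ℝ)*(m:ℝ)) * ((8*(m:ℝ))^(2*p) * ((r:ℝ)^2*(k:ℝ))) := by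
        rw [expand]; ring
      have mid1 : (2073600*(m:ℝ)*(m:ℝ)) ≤ ((10:ℝ)^7/8)^(2*p) * (10^7*(m:ℝ)) := by
        have h1 : 2073600*(m:ℝ) ≤ 10^7*(m:ℝ) := by linarith [hm0.le]
        have h2 := mul_le_mul h1 b1 hm0.le (by positivity)
        linarith [h2]
      have mid2 : (2073600*(m:ℝ)*(m:ℝ)) * ((8*(m:ℝ))^(2*p) * ((r:ℝ)^2*(k:ℝ)))
          ≤ (((10:ℝ)^7/8)^(2*p) * (10^7*(m:ℝ))) * ((8*(m:ℝ))^(2*p) * ((r:ℝ)^2*(k:ℝ))) :=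
        mul_le_mul_of_nonneg_right mid1 hfactnn
      have mid3 : (((10:ℝ)^7/8)^(2*p) * (10^7*(m:ℝ))) * ((8*(m:ℝ))^(2*p) * ((r:ℝ)^2*(k:ℝ)))
          = (10^7*(m:ℝ))^(2*p) * (10^7*(r:ℝ)^2*(k:ℝ)*(m:ℝ)) := by
        rw [step3]; ring
      have mid4 : (10^7*(m:ℝ))^(2*p) * (10^7*(r:ℝ)^2*(k:ℝ)*(m:ℝ))
          ≤ (10^7*(r:ℝ)^2*(k:ℝ)*(m:ℝ))^(2*p) * (10^7*(r:ℝ)^2*(k:ℝ)*(m:ℝ)) :=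
        mul_le_mul_of_nonneg_right step2 hX0nn
      have mid5 : (10^7*(r:ℝ)^2*(k:ℝ)*(m:ℝ))^(2*p) * (10^7*(r:ℝ)^2*(k:ℝ)*(m:ℝ))
          = (10^7*(r:ℝ)^2*(k:ℝ)*(m:ℝ))^(2*p+1) := (pow_succ _ _).symm
      calc 32400*(r:ℝ)^2*(8*(m:ℝ))^(2*m)*(k:ℝ)
          = (2073600*(m:ℝ)*(m:ℝ)) * ((8*(m:ℝ))^(2*p) * ((r:ℝ)^2*(k:ℝ))) := lhs_eq
        _ ≤ (((10:ℝ)^7/8)^(2*p) * (10^7*(m:ℝ))) * ((8*(m:ℝ))^(2*p) * ((r:ℝ)^2*(k:ℝ))) := mid2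
        _ = (10^7*(m:ℝ))^(2*p) * (10^7*(r:ℝ)^2*(k:ℝ)*(m:ℝ)) := mid3
        _ ≤ (10^7*(r:ℝ)^2*(k:ℝ)*(m:ℝ))^(2*p) * (10^7*(r:ℝ)^2*(k:ℝ)*(m:ℝ)) := mid4
        _ = (10^7*(r:ℝ)^2*(k:ℝ)*(m:ℝ))^(2*p+1) := mid5
        _ ≤ (n:ℝ)^(2*p+1) := step1
    have core : 32400*(r:ℝ)^2*(8*(m:ℝ))^(2*m)*(k:ℝ)*(n:ℝ) ≤ (n:ℝ)^(2*m) := by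
      have h2 : (n:ℝ)^(2*p+1) * (n:ℝ) = (n:ℝ)^(2*m) := by
        rw [← pow_succ]; congr 1; omega
      calc 32400*(r:ℝ)^2*(8*(m:ℝ))^(2*m)*(k:ℝ)*(n:ℝ)
          = (32400*(r:ℝ)^2*(8*(m:ℝ))^(2*m)*(k:ℝ))*(n:ℝ) := by ring
        _ ≤ (n:ℝ)^(2*p+1) * (n:ℝ) := mul_le_mul_of_nonneg_right core' hn0.le
        _ = (n:ℝ)^(2*m) := h2
    have hmain : 180*(r:ℝ)*(4:ℝ)^m*(Real.sqrt k * Real.sqrt n) ≤ S^m := by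
      have hXnn : (0:ℝ) ≤ 180*(r:ℝ)*(4:ℝ)^m*(Real.sqrt k * Real.sqrt n) := by positivity
      have hSnn : (0:ℝ) ≤ S := by rw [hS_def]; positivity
      have hSmnn : (0:ℝ) ≤ S^m := by positivity
      have h16m : ((4:ℝ)^m)^2 * (2*(m:ℝ))^(2*m) = (8*(m:ℝ))^(2*m) := by
        rw [← pow_mul, mul_comm m 2, ← mul_pow]
        congr 1; ring
      have hsqS : (S^m)^2 = (n:ℝ)^(2*m) / (2*(m:ℝ))^(2*m) := by
        rw [hS_def, ← pow_mul, mul_comm m 2, div_pow]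
      have hle2 : (180*(r:ℝ)*(4:ℝ)^m*(Real.sqrt k * Real.sqrt n))^2 ≤ (S^m)^2 := by
        have hsqX : (180*(r:ℝ)*(4:ℝ)^m*(Real.sqrt k * Real.sqrt n))^2
            = 32400*(r:ℝ)^2*(((4:ℝ)^m)^2*(2*(m:ℝ))^(2*m))*(k:ℝ)*(n:ℝ) / (2*(m:ℝ))^(2*m) := by
          rw [mul_pow, mul_pow, mul_pow, mul_pow, Real.sq_sqrt hk0.le, Real.sq_sqrt hn0.le]
          field_simp
          ring
        rw [hsqX, hsqS, h16m]
        gcongr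
      have hfin := Real.sqrt_le_sqrt hle2
      rwa [Real.sqrt_sq hXnn, Real.sqrt_sq hSmnn] at hfin
    have t1 : (r:ℝ)*Bc*L ≤ (r:ℝ)*(4:ℝ)^m*L := by
      apply mul_le_mul_of_nonneg_right _ hL0
      exact mul_le_mul_of_nonneg_left hBc4 hr0.le
    have t2 : (r:ℝ)*(4:ℝ)^m*L ≤ (r:ℝ)*(4:ℝ)^m*(6*(Real.sqrt k * Real.sqrt n)) :=
      mul_le_mul_of_nonneg_left hLub (by positivity)
    have t3 : (r:ℝ)*(4:ℝ)^m*(6*(Real.sqrt k * Real.sqrt n))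
        = 1/30 * (180*(r:ℝ)*(4:ℝ)^m*(Real.sqrt k * Real.sqrt n)) := by ring
    have t4 : 1/30 * (180*(r:ℝ)*(4:ℝ)^m*(Real.sqrt k * Real.sqrt n)) ≤ 1/30 * S^m := by
      linarith [hmain]
    have t5 : 1/30 * S^m ≤ 1/30 * A := by linarith [hA_lb]
    linarith

  -- final assembly
  have hlogb9 : (31:ℝ)/10 ≤ Real.logb 2 9 := by
    have hl2 : (0:ℝ) < Real.log 2 := Real.log_pos (by norm_num)
    have key : Real.log ((2:ℝ)^(31:ℕ)) ≤ Real.log ((9:ℝ)^(10:ℕ)) :=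
      Real.log_le_log (by positivity) (by norm_num)
    rw [Real.log_pow, Real.log_pow] at key
    rw [Real.logb, le_div_iff₀ hl2]
    push_cast at key; linarith
  have hcoeff : (1/10 : ℝ) * A ≤ (Real.logb 2 9 - 3) * A :=
    mul_le_mul_of_nonneg_right (by linarith) hA0
  linarith
end

section
/- Let k > t ≥ 1 and r ≥ 7 be integers with r ≡ 1 (mod 3), and let s = ⌈r/3⌉. Let I_1, ..., I_s be t-stars in the k-element subsets of [n] with centres T_1, ..., T_s such that |T_i ∩ T_j| ≤ max(0, 2t - k - 1) for all 1 ≤ i < j ≤ s. Let F = I_1 ∪ ... ∪ I_{s-1} and F̃ = I_1 ∪ ... ∪ I_s. Let (C_1, ..., C_{s-1}) be a partition of a set of r colours with |C_1| = 4 and |C_i| = 3 for 2 ≤ i ≤ s-1, and let (C'_1, C_2, ..., C_{s-1}, C'_s) be obtained by partitioning C_1 into two sets C'_1 and C'_s of size two. If Φ(C) is the set of colourings of F in which each member receives a colour from the union of the C_i over the stars I_i (i ≤ s-1) containing it, and Φ̃(C') is the set of colourings of F̃ in which each member receives a colour from the union over the stars containing it of the corresponding parts of (C'_1, C_2, ...,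 C_{s-1}, C'_s), then |Φ̃(C')| ≥ |Φ(C)|. -/
attribute [local instance] Classical.propDecidable

lemma aux_card_pi {α β : Type*} [Fintype α] [Fintype β] (p : α → β → Prop) :
    Nat.card {φ : α → β // ∀ a, p a (φ a)} = ∏ a : α, (Finset.univ.filter (p a)).card := by
  rw [Nat.card_congr (Equiv.subtypePiEquivPi), Nat.card_pi]
  refine Finset.prod_congr rfl fun a _ => ?_
  rw [Nat.card_eq_fintype_card, Fintype.card_subtype]

lemma aux_subset_image {α : Type*} [DecidableEq α] {f : α → α} (hf : Function.Involutive f)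
    (A B : Finset α) : B ⊆ A.image f ↔ B.image f ⊆ A := by
  have key : ∀ x, x ∈ A.image f ↔ f x ∈ A := by
    intro x
    simp only [Finset.mem_image]
    constructor
    · rintro ⟨a, ha, rfl⟩; rwa [hf a]
    · intro h; exact ⟨f x, h, hf x⟩
  constructor
  · intro h y hy
    simp only [Finset.mem_image] at hy
    obtain ⟨b, hb, rfl⟩ := hy
    exact (key b).mp (h hb)
  · intro h x hx
    rw [key]
    exact h (Finset.mem_image_of_mem f hx)

lemma aux_star_card {α : Type*} [Fintype α] [DecidableEq α] (k : ℕ) (Ts : Finset α)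
    (h : Ts.card ≤ k) :
    (Finset.univ.filter fun A : Finset α => A.card = k ∧ Ts ⊆ A).card
      = (Fintype.card α - Ts.card).choose (k - Ts.card) := by
  have hcard : ((Finset.univ \ Ts : Finset α)).card = Fintype.card α - Ts.card := by
    rw [Finset.card_sdiff_of_subset (Finset.subset_univ _), Finset.card_univ]
  rw [← hcard, ← Finset.card_powersetCard (k - Ts.card) (Finset.univ \ Ts)]
  refine Finset.card_bij' (fun A _ => A \ Ts) (fun B _ => B ∪ Ts) ?_ ?_ ?_ ?_
  · intro A hA
    simp only [Finset.mem_filter] at hA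
    rw [Finset.mem_powersetCard]
    exact ⟨Finset.sdiff_subset_sdiff (Finset.subset_univ _) (le_refl _),
      by rw [Finset.card_sdiff_of_subset hA.2.2, hA.2.1]⟩
  · intro B hB
    rw [Finset.mem_powersetCard] at hB
    have hdisj : Disjoint B Ts := by
      intro x hx1 hx2
      intro y hy
      have := hB.1 (hx1 hy)
      simp only [Finset.mem_sdiff] at this
      exact absurd (hx2 hy) this.2
    simp only [Finset.mem_filter, Finset.mem_univ, true_and]
    constructor
    · rw [Finset.card_union_of_disjoint hdisj, hB.2]
      omega
    · exact Finset.subset_union_right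
  · intro A hA
    simp only [Finset.mem_filter] at hA
    exact Finset.sdiff_union_of_subset hA.2.2
  · intro B hB
    rw [Finset.mem_powersetCard] at hB
    have hdisj : Disjoint B Ts := by
      intro x hx1 hx2
      intro y hy
      have := hB.1 (hx1 hy)
      simp only [Finset.mem_sdiff] at this
      exact absurd (hx2 hy) this.2
    show (B ∪ Ts) \ Ts = B
    rw [Finset.union_sdiff_right, Finset.sdiff_eq_self_of_disjoint hdisj]

lemma aux_filter_biUnion {β ι : Type*} [Fintype β] [DecidableEq β] (I : Finset ι)
    (P : ι → Prop) (C : ι → Finset β)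
    [instP : DecidablePred P]
    {inst : DecidablePred fun c : β => ∃ i ∈ I, P i ∧ c ∈ C i} :
    (Finset.univ.filter fun c : β => ∃ i ∈ I, P i ∧ c ∈ C i) = (I.filter P).biUnion C := by
  ext c
  simp only [Finset.mem_filter, Finset.mem_univ, true_and, Finset.mem_biUnion]
  tauto

lemma aux_card_colours {β ι : Type*} [Fintype β] [DecidableEq β] (I : Finset ι)
    (P : ι → Prop) (C : ι → Finset β)
    [instP : DecidablePred P]
    {inst : DecidablePred fun c : β => ∃ i ∈ I, P i ∧ c ∈ C i}
    (hdisj : ∀ i ∈ I, ∀ j ∈ I, i ≠ j → Disjoint (C i) (C j)) :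
    (Finset.univ.filter fun c : β => ∃ i ∈ I, P i ∧ c ∈ C i).card
      = ∑ i ∈ I, if P i then (C i).card else 0 := by
  rw [aux_filter_biUnion I P C, Finset.card_biUnion, ← Finset.sum_filter]
  intro x hx y hy hxy
  exact hdisj x (Finset.mem_of_mem_filter x hx) y (Finset.mem_of_mem_filter y hy) hxy

lemma aux_card_pi' {α β : Type*} [Fintype β] [DecidableEq α] (S : Finset α) (p : α → β → Prop) :
    Nat.card {φ : S → β // ∀ a : S, p ↑a (φ a)} = ∏ a ∈ S, (Finset.univ.filter (p a)).card := by
  rw [aux_card_pi (fun (a : S) c => p ↑a c)]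
  exact Finset.prod_coe_sort S (fun a => (Finset.univ.filter (p a)).card)

set_option maxHeartbeats 1000000 in
theorem stmt_14 (k t r s n : ℕ) (ht : 1 ≤ t) (htk : t < k) (hr : 7 ≤ r)
    (hrmod : r % 3 = 1) (hs : s = (r + 2) / 3)
    -- `I_1, ..., I_s` are `t`-stars with centres `T 0, ..., T (s-1)` whose pairwise
    -- intersections have size at most `max(0, 2t - k - 1)`
    (T : ℕ → Finset (Fin n)) (hT : ∀ i < s, (T i).card = t)
    (hTint : ∀ i < s, ∀ j < s, i ≠ j → (T i ∩ T j).card ≤ 2 * t - k - 1)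
    -- `(C_1, ..., C_{s-1})` is a partition of the `r` colours with `|C_1| = 4`
    -- and `|C_i| = 3` for `2 ≤ i ≤ s - 1`
    (Cp : ℕ → Finset (Fin r))
    (hC1 : (Cp 0).card = 4)
    (hCi : ∀ i, 1 ≤ i → i < s - 1 → (Cp i).card = 3)
    (hCdisj : ∀ i < s - 1, ∀ j < s - 1, i ≠ j → Disjoint (Cp i) (Cp j))
    (hCcover : (Finset.range (s - 1)).biUnion Cp = Finset.univ)
    -- `C_1` is split into two sets `C'_1` and `C'_s` of size two
    (C1' Cs' : Finset (Fin r)) (hsplit : Disjoint C1' Cs') (hunion : C1' ∪ Cs' = Cp 0)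
    (hc1 : C1'.card = 2) (hcs : Cs'.card = 2) :
    -- `F = I_1 ∪ ... ∪ I_{s-1}`,  `F̃ = I_1 ∪ ... ∪ I_s`
    (let F : Finset (Finset (Fin n)) :=
      Finset.univ.filter fun A : Finset (Fin n) =>
        A.card = k ∧ ∃ i ∈ Finset.range (s - 1), T i ⊆ A
    let Ftil : Finset (Finset (Fin n)) :=
      Finset.univ.filter fun A : Finset (Fin n) =>
        A.card = k ∧ ∃ i ∈ Finset.range s, T i ⊆ A
    -- the partition `(C'_1, C_2, ..., C_{s-1}, C'_s)`
    let Cp' : ℕ → Finset (Fin r) := fun i =>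
      if i = 0 then C1' else if i = s - 1 then Cs' else Cp i
    -- `|Φ(C)| ≤ |Φ̃(C')|`
    Nat.card {φ : F → Fin r //
        ∀ A : F, ∃ i ∈ Finset.range (s - 1),
          T i ⊆ (A : Finset (Fin n)) ∧ φ A ∈ Cp i} ≤
      Nat.card {φ : Ftil → Fin r //
        ∀ A : Ftil, ∃ i ∈ Finset.range s,
          T i ⊆ (A : Finset (Fin n)) ∧ φ A ∈ Cp' i}) := by
  intro F Ftil Cp'
  have hs3 : 3 ≤ s := by omega
  -- abbreviations
  set μA : Finset (Fin n) → ℕ :=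
    fun A => ∑ i ∈ Finset.Ico 1 (s-1), if T i ⊆ A then 1 else 0 with hμdef
  set gval : Finset (Fin n) → ℕ :=
    fun A => (if T 0 ⊆ A then 4 else 0) + 3 * μA A with hgval
  set g'val : Finset (Fin n) → ℕ :=
    fun A => (if T 0 ⊆ A then 2 else 0) + 3 * μA A + (if T (s-1) ⊆ A then 2 else 0)
    with hg'val
  -- facts about Cp'
  have hsub1 : C1' ⊆ Cp 0 := by rw [← hunion]; exact Finset.subset_union_left
  have hsubs : Cs' ⊆ Cp 0 := by rw [← hunion]; exact Finset.subset_union_right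
  have hCp'0 : Cp' 0 = C1' := by simp [Cp']
  have hCp's : Cp' (s-1) = Cs' := by simp only [Cp']; rw [if_neg (by omega)]; simp
  have hCp'mid : ∀ i, 1 ≤ i → i < s - 1 → Cp' i = Cp i := by
    intro i h1 h2; simp only [Cp']; rw [if_neg (by omega), if_neg (by omega)]
  have hCp'disj : ∀ i ∈ Finset.range s, ∀ j ∈ Finset.range s, i ≠ j →
      Disjoint (Cp' i) (Cp' j) := by
    intro i hi j hj hij
    simp only [Finset.mem_range] at hi hj
    simp only [Cp']
    split_ifs with h1 h2 h3 h4 h5 h6 h7 h8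
    · omega
    · exact hsplit
    · exact (hCdisj 0 (by omega) j (by omega) (by omega)).mono_left hsub1
    · exact hsplit.symm
    · omega
    · exact (hCdisj 0 (by omega) j (by omega) (by omega)).mono_left hsubs
    · exact (hCdisj i (by omega) 0 (by omega) (by omega)).mono_right hsub1
    · exact (hCdisj i (by omega) 0 (by omega) (by omega)).mono_right hsubs
    · exact hCdisj i (by omega) j (by omega) hij
  -- step 1 : Nat.card as products
  rw [aux_card_pi' F (fun (A : Finset (Fin n)) (c : Fin r) =>
      ∃ i ∈ Finset.range (s - 1), T i ⊆ A ∧ c ∈ Cp i),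
    aux_card_pi' Ftil (fun (A : Finset (Fin n)) (c : Fin r) =>
      ∃ i ∈ Finset.range s, T i ⊆ A ∧ c ∈ Cp' i)]
  -- step 2: compute factor values
  refine le_trans (le_of_eq (Finset.prod_congr rfl (g := gval) fun A hA => ?_))
    (le_trans ?_ (le_of_eq (Finset.prod_congr rfl (g := g'val) fun A hA => ?_).symm))
  · -- value of g on F
    rw [aux_card_colours (Finset.range (s-1)) (fun i => T i ⊆ A) Cp
      (fun i hi j hj hij => hCdisj i (Finset.mem_range.mp hi) j (Finset.mem_range.mp hj) hij)]
    have hins : Finset.range (s-1) = insert 0 (Finset.Ico 1 (s-1)) := by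
      ext x; simp only [Finset.mem_range, Finset.mem_insert, Finset.mem_Ico]; omega
    rw [hins, Finset.sum_insert (by simp)]
    simp only [hgval, hC1, hμdef, Finset.mul_sum]
    congr 1
    refine Finset.sum_congr rfl fun i hi => ?_
    simp only [Finset.mem_Ico] at hi
    rw [hCi i hi.1 hi.2]
    split_ifs <;> simp
  rotate_left
  · -- value of g' on Ftil
    rw [aux_card_colours (Finset.range s) (fun i => T i ⊆ A) Cp' hCp'disj]
    have hins : Finset.range s = insert 0 (insert (s-1) (Finset.Ico 1 (s-1))) := by
      ext x
      simp only [Finset.mem_range, Finset.mem_insert, Finset.mem_Ico]; omega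
    rw [hins, Finset.sum_insert (by simp only [Finset.mem_insert, Finset.mem_Ico]; omega),
      Finset.sum_insert (by simp)]
    have hmid : ∑ i ∈ Finset.Ico 1 (s-1), (if T i ⊆ A then (Cp' i).card else 0)
        = 3 * μA A := by
      simp only [hμdef, Finset.mul_sum]
      refine Finset.sum_congr rfl fun i hi => ?_
      simp only [Finset.mem_Ico] at hi
      rw [hCp'mid i hi.1 hi.2, hCi i hi.1 hi.2]
      split_ifs <;> simp
    rw [hmid, hCp'0, hCp's]
    simp only [hg'val, hc1, hcs]
    omega
  -- step 3: the combinatorial inequality  ∏_F gval ≤ ∏_Ftil g'val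
  have hFmem : ∀ A, A ∈ F ↔ (A.card = k ∧ ∃ i ∈ Finset.range (s-1), T i ⊆ A) := by
    intro A; simp [F]
  have hFtmem : ∀ A, A ∈ Ftil ↔ (A.card = k ∧ ∃ i ∈ Finset.range s, T i ⊆ A) := by
    intro A; simp [Ftil]
  have hFsub : F ⊆ Ftil := by
    intro A hA
    rw [hFmem] at hA; rw [hFtmem]
    obtain ⟨hk, i, hi, h⟩ := hA
    simp only [Finset.mem_range] at hi
    exact ⟨hk, i, by simp only [Finset.mem_range]; omega, h⟩
  have hμpos : ∀ A, 1 ≤ μA A ↔ ∃ i, 1 ≤ i ∧ i < s-1 ∧ T i ⊆ A := by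
    intro A
    constructor
    · intro h
      by_contra hc
      push_neg at hc
      have : μA A = 0 := Finset.sum_eq_zero fun i hi => by
        simp only [Finset.mem_Ico] at hi
        simp [hc i hi.1 hi.2]
      omega
    · rintro ⟨i, h1, h2, h3⟩
      have := Finset.single_le_sum (f := fun i => if T i ⊆ A then 1 else 0)
        (fun _ _ => Nat.zero_le _) (show i ∈ Finset.Ico 1 (s-1) by
          simp only [Finset.mem_Ico]; omega)
      simpa [h3, hμdef] using this
  have hmemF0 : ∀ A ∈ Ftil, T 0 ⊆ A → A ∈ F := by
    intro A hA h0
    rw [hFtmem] at hA; rw [hFmem]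
    exact ⟨hA.1, 0, by simp only [Finset.mem_range]; omega, h0⟩
  have hmemFμ : ∀ A ∈ Ftil, 1 ≤ μA A → A ∈ F := by
    intro A hA hμ
    obtain ⟨i, h1, h2, h3⟩ := (hμpos A).mp hμ
    rw [hFtmem] at hA; rw [hFmem]
    exact ⟨hA.1, i, by simp only [Finset.mem_range]; omega, h3⟩
  have hX00F : ∀ A ∈ Ftil, ¬T 0 ⊆ A → ¬T (s-1) ⊆ A → 1 ≤ μA A := by
    intro A hA h0 hs1
    rw [hFtmem] at hA
    obtain ⟨hk, i, hi, hTi⟩ := hA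
    simp only [Finset.mem_range] at hi
    have h1 : 1 ≤ i := by
      rcases Nat.eq_zero_or_pos i with rfl | h
      · exact absurd hTi h0
      · exact h
    have h2 : i < s - 1 := by
      rcases Nat.lt_or_ge i (s-1) with h | h
      · exact h
      · have : i = s - 1 := by omega
        exact absurd (this ▸ hTi) hs1
    exact (hμpos A).mpr ⟨i, h1, h2, hTi⟩
  have hX01notF : ∀ A ∈ Ftil, ¬T 0 ⊆ A → μA A = 0 → A ∉ F := by
    intro A hA h0 hμ0 hF
    rw [hFmem] at hF
    obtain ⟨hk, i, hi, hTi⟩ := hF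
    simp only [Finset.mem_range] at hi
    rcases Nat.eq_zero_or_pos i with rfl | h
    · exact h0 hTi
    · have := (hμpos A).mpr ⟨i, h, by omega, hTi⟩
      omega
  set G : Finset (Fin n) → ℕ := fun A => if A ∈ F then gval A else 1 with hG
  have hFG : ∏ A ∈ F, gval A = ∏ A ∈ Ftil, G A := by
    calc ∏ A ∈ F, gval A = ∏ A ∈ F, G A :=
          Finset.prod_congr rfl fun A hA => by simp only [hG, if_pos hA]
    _ = ∏ A ∈ Ftil, G A :=
          Finset.prod_subset hFsub (fun A _ hA => by simp only [hG, if_neg hA])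
  rw [hFG]
  set q : Finset (Fin n) → Prop := fun A => (T 0 ⊆ A ↔ T (s-1) ⊆ A) with hqd
  rw [← Finset.prod_filter_mul_prod_filter_not Ftil q G,
    ← Finset.prod_filter_mul_prod_filter_not Ftil q g'val]
  refine Nat.mul_le_mul ?_ ?_
  · -- on the part where q holds, G = g'val
    refine le_of_eq (Finset.prod_congr rfl fun A hA => ?_)
    simp only [Finset.mem_filter] at hA
    obtain ⟨hA, hqA⟩ := hA
    by_cases h0 : T 0 ⊆ A
    · have hsA : T (s-1) ⊆ A := hqA.mp h0
      have hF : A ∈ F := hmemF0 A hA h0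
      simp only [hG, if_pos hF, hgval, hg'val, if_pos h0, if_pos hsA]
      omega
    · have hsA : ¬T (s-1) ⊆ A := fun h => h0 (hqA.mpr h)
      have hμ1 := hX00F A hA h0 hsA
      have hF : A ∈ F := hmemFμ A hA hμ1
      simp only [hG, if_pos hF, hgval, hg'val, if_neg h0, if_neg hsA]
      omega
  · -- the part where q fails :  X10 ∪ X01
    set X10 : Finset (Finset (Fin n)) :=
      Ftil.filter (fun A => T 0 ⊆ A ∧ ¬ T (s-1) ⊆ A) with hX10d
    set X01 : Finset (Finset (Fin n)) :=
      Ftil.filter (fun A => ¬ T 0 ⊆ A ∧ T (s-1) ⊆ A) with hX01d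
    have hsplitX : Ftil.filter (fun A => ¬ q A) = X10 ∪ X01 := by
      ext A
      simp only [hX10d, hX01d, hqd, Finset.mem_filter, Finset.mem_union]
      tauto
    have hdisjX : Disjoint X10 X01 := by
      rw [Finset.disjoint_left]
      intro A hA hA'
      simp only [hX10d, hX01d, Finset.mem_filter] at hA hA'
      tauto
    rw [hsplitX, Finset.prod_union hdisjX, Finset.prod_union hdisjX]
    -- the injection
    obtain ⟨ι, hιinj, hι⟩ : ∃ ι : Finset (Fin n) → Finset (Fin n),
        Set.InjOn ι X10 ∧ ∀ A ∈ X10, ι A ∈ X01 ∧ μA (ι A) = μA A := by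
      by_cases hcase : 2 * t ≤ k + 1
      · -- centres pairwise disjoint; use a swap involution
        have hdisjT : ∀ i < s, ∀ j < s, i ≠ j → Disjoint (T i) (T j) := by
          intro i hi j hj hij
          have h1 := hTint i hi j hj hij
          rw [Finset.disjoint_iff_inter_eq_empty, ← Finset.card_eq_zero]
          omega
        have hd0s : Disjoint (T 0) (T (s-1)) :=
          hdisjT 0 (by omega) (s-1) (by omega) (by omega)
        have hcard0s : (T 0).card = (T (s-1)).card := by
          rw [hT 0 (by omega), hT (s-1) (by omega)]
        set e := Finset.equivOfCardEq hcard0s with he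
        set f : Fin n → Fin n := fun x =>
          if h : x ∈ T 0 then ((e ⟨x, h⟩ : { y // y ∈ T (s-1) }) : Fin n)
          else if h' : x ∈ T (s-1) then ((e.symm ⟨x, h'⟩ : { y // y ∈ T 0 }) : Fin n)
          else x with hf
        have hfinv : Function.Involutive f := by
          intro x
          by_cases h : x ∈ T 0
          · have h1 : ((e ⟨x, h⟩ : { y // y ∈ T (s-1) }) : Fin n) ∈ T (s-1) :=
              (e ⟨x, h⟩).2
            have h2 : ((e ⟨x, h⟩ : { y // y ∈ T (s-1) }) : Fin n) ∉ T 0 :=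
              Finset.disjoint_right.mp hd0s h1
            simp only [hf]
            rw [dif_pos h, dif_neg h2, dif_pos h1]
            have h3 : (⟨((e ⟨x, h⟩ : { y // y ∈ T (s-1) }) : Fin n), h1⟩ :
                { y // y ∈ T (s-1) }) = e ⟨x, h⟩ := rfl
            rw [h3, Equiv.symm_apply_apply]
          · by_cases h' : x ∈ T (s-1)
            · have h1 : ((e.symm ⟨x, h'⟩ : { y // y ∈ T 0 }) : Fin n) ∈ T 0 :=
                (e.symm ⟨x, h'⟩).2
              have h2 : ((e.symm ⟨x, h'⟩ : { y // y ∈ T 0 }) : Fin n) ∉ T (s-1) :=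
                Finset.disjoint_left.mp hd0s h1
              simp only [hf]
              rw [dif_neg h, dif_pos h', dif_pos h1]
              have h3 : (⟨((e.symm ⟨x, h'⟩ : { y // y ∈ T 0 }) : Fin n), h1⟩ :
                  { y // y ∈ T 0 }) = e.symm ⟨x, h'⟩ := rfl
              rw [h3, Equiv.apply_symm_apply]
            · simp only [hf]
              rw [dif_neg h, dif_neg h', dif_neg h, dif_neg h']
        have hfinj := hfinv.injective
        have him0 : (T 0).image f = T (s-1) := by
          refine Finset.eq_of_subset_of_card_le ?_ ?_
          · intro y hy
            obtain ⟨x, hx, rfl⟩ := Finset.mem_image.mp hy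
            simp only [hf]
            rw [dif_pos hx]
            exact (e ⟨x, hx⟩).2
          · rw [Finset.card_image_of_injective _ hfinj]
            exact le_of_eq hcard0s.symm
        have hims : (T (s-1)).image f = T 0 := by
          refine Finset.eq_of_subset_of_card_le ?_ ?_
          · intro y hy
            obtain ⟨x, hx, rfl⟩ := Finset.mem_image.mp hy
            have hx0 : x ∉ T 0 := Finset.disjoint_right.mp hd0s hx
            simp only [hf]
            rw [dif_neg hx0, dif_pos hx]
            exact (e.symm ⟨x, hx⟩).2
          · rw [Finset.card_image_of_injective _ hfinj]
            exact le_of_eq hcard0s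
        have himmid : ∀ i, 1 ≤ i → i < s - 1 → (T i).image f = T i := by
          intro i h1 h2
          have hfix : ∀ x ∈ T i, f x = x := by
            intro x hx
            have hx0 : x ∉ T 0 :=
              Finset.disjoint_left.mp (hdisjT i (by omega) 0 (by omega) (by omega)) hx
            have hxs : x ∉ T (s-1) :=
              Finset.disjoint_left.mp
                (hdisjT i (by omega) (s-1) (by omega) (by omega)) hx
            simp only [hf]
            rw [dif_neg hx0, dif_neg hxs]
          calc (T i).image f = (T i).image id :=
                Finset.image_congr fun x hx => hfix x hx
            _ = T i := Finset.image_id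
        refine ⟨fun A => A.image f,
          fun x _ y _ h => Finset.image_injective hfinj h, ?_⟩
        intro A hA
        simp only [hX10d, Finset.mem_filter] at hA
        obtain ⟨hAf, h0A, hsA⟩ := hA
        have hcardA : (A.image f).card = A.card := Finset.card_image_of_injective _ hfinj
        have hb : T (s-1) ⊆ A.image f := by
          rw [aux_subset_image hfinv, hims]; exact h0A
        have hna : ¬ T 0 ⊆ A.image f := by
          rw [aux_subset_image hfinv, him0]; exact hsA
        constructor
        · simp only [hX01d, Finset.mem_filter]
          refine ⟨?_, hna, hb⟩
          rw [hFtmem] at hAf ⊢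
          exact ⟨by rw [hcardA]; exact hAf.1, s-1,
            by simp only [Finset.mem_range]; omega, hb⟩
        · simp only [hμdef]
          refine Finset.sum_congr rfl fun i hi => ?_
          simp only [Finset.mem_Ico] at hi
          have hiff : T i ⊆ A.image f ↔ T i ⊆ A := by
            rw [aux_subset_image hfinv, himmid i hi.1 hi.2]
          simp only [hiff]
      · -- no set contains two centres; the two stars have equal size
        push_neg at hcase
        have hno2 : ∀ A : Finset (Fin n), A.card = k → ∀ i < s, ∀ j < s, i ≠ j →
            T i ⊆ A → T j ⊆ A → False := by
          intro A hk i hi j hj hij hTi hTj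
          have h1 := Finset.card_union_add_card_inter (T i) (T j)
          have h2 := hTint i hi j hj hij
          have h3 : T i ∪ T j ⊆ A := Finset.union_subset hTi hTj
          have h4 := Finset.card_le_card h3
          rw [hT i hi, hT j hj] at h1
          omega
        have hX10eq : X10 = Finset.univ.filter (fun A => A.card = k ∧ T 0 ⊆ A) := by
          ext A
          simp only [hX10d, Finset.mem_filter, Finset.mem_univ, true_and]
          rw [hFtmem]
          constructor
          · rintro ⟨⟨hk, _⟩, h0, _⟩; exact ⟨hk, h0⟩
          · rintro ⟨hk, h0⟩
            exact ⟨⟨hk, 0, by simp only [Finset.mem_range]; omega, h0⟩, h0,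
              fun hS => hno2 A hk 0 (by omega) (s-1) (by omega) (by omega) h0 hS⟩
        have hX01eq : X01 = Finset.univ.filter (fun A => A.card = k ∧ T (s-1) ⊆ A) := by
          ext A
          simp only [hX01d, Finset.mem_filter, Finset.mem_univ, true_and]
          rw [hFtmem]
          constructor
          · rintro ⟨⟨hk, _⟩, _, hS⟩; exact ⟨hk, hS⟩
          · rintro ⟨hk, hS⟩
            exact ⟨⟨hk, s-1, by simp only [Finset.mem_range]; omega, hS⟩,
              fun h0 => hno2 A hk 0 (by omega) (s-1) (by omega) (by omega) h0 hS, hS⟩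
        have hc10 : X10.card = X01.card := by
          rw [hX10eq, hX01eq, aux_star_card k (T 0) (by rw [hT 0 (by omega)]; omega),
            aux_star_card k (T (s-1)) (by rw [hT (s-1) (by omega)]; omega),
            hT 0 (by omega), hT (s-1) (by omega)]
        set eqv := Finset.equivOfCardEq hc10 with heqv
        have hμz : ∀ B, B ∈ X10 ∨ B ∈ X01 → μA B = 0 := by
          intro B hB
          refine Finset.sum_eq_zero fun i hi => ?_
          simp only [Finset.mem_Ico] at hi
          rw [if_neg]
          intro hTiB
          rcases hB with hB | hB
          · simp only [hX10d, Finset.mem_filter] at hB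
            have hk := ((hFtmem B).mp hB.1).1
            exact hno2 B hk i (by omega) 0 (by omega) (by omega) hTiB hB.2.1
          · simp only [hX01d, Finset.mem_filter] at hB
            have hk := ((hFtmem B).mp hB.1).1
            exact hno2 B hk i (by omega) (s-1) (by omega) (by omega) hTiB hB.2.2
        refine ⟨fun A => if h : A ∈ X10 then ((eqv ⟨A, h⟩ : { B // B ∈ X01 }) :
          Finset (Fin n)) else ∅, ?_, ?_⟩
        · intro x hx y hy hxy
          simp only [Finset.mem_coe] at hx hy
          simp only [dif_pos hx, dif_pos hy] at hxy
          have h2 := eqv.injective (Subtype.coe_injective hxy)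
          exact congrArg Subtype.val h2
        · intro A hA
          simp only [dif_pos hA]
          have hmem : ((eqv ⟨A, hA⟩ : { B // B ∈ X01 }) : Finset (Fin n)) ∈ X01 :=
            (eqv ⟨A, hA⟩).2
          exact ⟨hmem, by rw [hμz _ (Or.inr hmem), hμz A (Or.inl hA)]⟩
    -- factor values on the pieces
    have hvalX10G : ∀ A ∈ X10, G A = 3 * μA A + 4 := by
      intro A hA
      simp only [hX10d, Finset.mem_filter] at hA
      have hF : A ∈ F := hmemF0 A hA.1 hA.2.1
      simp only [hG, if_pos hF, hgval, if_pos hA.2.1]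
      omega
    have hvalX10g' : ∀ A ∈ X10, g'val A = 3 * μA A + 2 := by
      intro A hA
      simp only [hX10d, Finset.mem_filter] at hA
      simp only [hg'val, if_pos hA.2.1, if_neg hA.2.2]
      omega
    have hvalX01G : ∀ A ∈ X01, G A = (if μA A = 0 then 1 else 3 * μA A) := by
      intro A hA
      simp only [hX01d, Finset.mem_filter] at hA
      rcases Nat.eq_zero_or_pos (μA A) with h | h
      · have := hX01notF A hA.1 hA.2.1 h
        simp [hG, if_neg this, h]
      · have hF : A ∈ F := hmemFμ A hA.1 h
        simp only [hG, if_pos hF, hgval, if_neg hA.2.1, if_neg (by omega : ¬ μA A = 0)]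
        omega
    have hvalX01g' : ∀ A ∈ X01, g'val A = 3 * μA A + 2 := by
      intro A hA
      simp only [hX01d, Finset.mem_filter] at hA
      simp only [hg'val, if_neg hA.2.1, if_pos hA.2.2]
      omega
    set Y : Finset (Finset (Fin n)) := X10.image ι with hY
    have hYsub : Y ⊆ X01 := by
      intro B hB
      obtain ⟨A, hA, rfl⟩ := Finset.mem_image.mp hB
      exact (hι A hA).1
    have himg : ∀ f : Finset (Fin n) → ℕ, ∏ B ∈ Y, f B = ∏ A ∈ X10, f (ι A) :=
      fun f => Finset.prod_image (fun x hx y hy h => hιinj hx hy h)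
    have e2 : ∏ B ∈ X01, G B
        = (∏ B ∈ X01 \ Y, (if μA B = 0 then 1 else 3 * μA B))
          * ∏ A ∈ X10, (if μA A = 0 then 1 else 3 * μA A) := by
      rw [Finset.prod_congr rfl hvalX01G, ← Finset.prod_sdiff hYsub, himg]
      congr 1
      exact Finset.prod_congr rfl fun A hA => by rw [(hι A hA).2]
    have e4 : ∏ B ∈ X01, g'val B
        = (∏ B ∈ X01 \ Y, (3 * μA B + 2)) * ∏ A ∈ X10, (3 * μA A + 2) := by
      rw [Finset.prod_congr rfl hvalX01g', ← Finset.prod_sdiff hYsub, himg]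
      congr 1
      exact Finset.prod_congr rfl fun A hA => by rw [(hι A hA).2]
    rw [Finset.prod_congr rfl hvalX10G, Finset.prod_congr rfl hvalX10g', e2, e4]
    have key1 : (∏ A ∈ X10, (3 * μA A + 4))
          * ∏ A ∈ X10, (if μA A = 0 then 1 else 3 * μA A)
        ≤ (∏ A ∈ X10, (3 * μA A + 2)) * ∏ A ∈ X10, (3 * μA A + 2) := by
      rw [← Finset.prod_mul_distrib, ← Finset.prod_mul_distrib]
      refine Finset.prod_le_prod (fun _ _ => Nat.zero_le _) (fun A _ => ?_)
      rcases Nat.eq_zero_or_pos (μA A) with h | h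
      · simp [h]
      · rw [if_neg (by omega)]
        nlinarith
    have key2 : (∏ B ∈ X01 \ Y, (if μA B = 0 then 1 else 3 * μA B))
        ≤ ∏ B ∈ X01 \ Y, (3 * μA B + 2) := by
      refine Finset.prod_le_prod (fun _ _ => Nat.zero_le _) (fun B _ => ?_)
      split_ifs <;> omega
    calc (∏ A ∈ X10, (3 * μA A + 4))
          * ((∏ B ∈ X01 \ Y, (if μA B = 0 then 1 else 3 * μA B))
            * ∏ A ∈ X10, (if μA A = 0 then 1 else 3 * μA A))
        = ((∏ A ∈ X10, (3 * μA A + 4))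
            * ∏ A ∈ X10, (if μA A = 0 then 1 else 3 * μA A))
          * (∏ B ∈ X01 \ Y, (if μA B = 0 then 1 else 3 * μA B)) := by ring
      _ ≤ ((∏ A ∈ X10, (3 * μA A + 2)) * ∏ A ∈ X10, (3 * μA A + 2))
          * ∏ B ∈ X01 \ Y, (3 * μA B + 2) := Nat.mul_le_mul key1 key2
      _ = (∏ A ∈ X10, (3 * μA A + 2))
          * ((∏ B ∈ X01 \ Y, (3 * μA B + 2)) * ∏ A ∈ X10, (3 * μA A + 2)) := by ring
end

section
/- Let s ≥ 2 and 1 ≤ ℓ ≤ C(s,2) be integers, and let m_1, ..., m_ℓ be integers with 2 ≤ m_j ≤ s for all j satisfying ∑_{j=1}^ℓ C(m_j, 2) = C(s, 2). Then ∑_{j=1}^ℓ (m_j - 1 - log_3 m_j) ≥ s - 1 - log_3 s, with equality if and only if ℓ = 1 and m_1 = s. -/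
/-!
Write `f x = x - 1 - log₃ x`. The ratio `f n / (n (n - 1))` is strictly decreasing for `n ≥ 2`;
after cross-multiplying, one step of this is `m ^ (m + 1) < (3 (m + 1)) ^ (m - 1)`. Hence
`f m_j ≥ (f s / (s (s - 1))) · m_j (m_j - 1)`, with equality iff `m_j = s`, and summing against
`∑ m_j (m_j - 1) = s (s - 1)` gives the bound. Equality forces every `m_j = s`, and then the
condition on the binomial sums forces `ℓ = 1`.
-/

open Finset Real

theorem sq_le_three_pow_pred {n : ℕ} (hn : 3 ≤ n) : n ^ 2 ≤ 3 ^ (n - 1) := by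
  induction n, hn using Nat.le_induction with
  | base => norm_num
  | succ k hk ih =>
    calc (k + 1) ^ 2 ≤ 3 * k ^ 2 := by nlinarith
      _ ≤ 3 * 3 ^ (k - 1) := by gcongr
      _ = 3 ^ (k + 1 - 1) := by rw [← pow_succ']; congr 1; omega

theorem pow_succ_lt_three_mul_succ_pow_pred {m : ℕ} (hm : 2 ≤ m) :
    m ^ (m + 1) < (3 * (m + 1)) ^ (m - 1) := by
  obtain rfl | hm3 := hm.eq_or_lt
  · norm_num
  calc m ^ (m + 1) = m ^ 2 * m ^ (m - 1) := by rw [← pow_add]; congr 1; omega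
    _ < 3 ^ (m - 1) * (m + 1) ^ (m - 1) := by
      refine Nat.mul_lt_mul_of_le_of_lt (sq_le_three_pow_pred hm3) ?_ (by positivity)
      exact Nat.pow_lt_pow_left (by omega) (by omega)
    _ = (3 * (m + 1)) ^ (m - 1) := (mul_pow 3 (m + 1) (m - 1)).symm

noncomputable def logDefect (x : ℝ) : ℝ := x - 1 - logb 3 x

noncomputable def logDefectRatio (n : ℕ) : ℝ := logDefect n / (n * (n - 1))

theorem logDefect_eq_logDefectRatio_mul {n : ℕ} (hn : 2 ≤ n) :
    logDefect n = logDefectRatio n * (n * (n - 1)) := by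
  have : (2 : ℝ) ≤ n := by exact_mod_cast hn
  rw [logDefectRatio, div_mul_cancel₀]
  nlinarith

theorem succ_mul_logb_three_lt {m : ℕ} (hm : 2 ≤ m) :
    ((m : ℝ) + 1) * logb 3 m < ((m : ℝ) - 1) * (1 + logb 3 ((m : ℝ) + 1)) := by
  have hpow : (m : ℝ) ^ (m + 1) < (3 * ((m : ℝ) + 1)) ^ (m - 1) := by
    exact_mod_cast pow_succ_lt_three_mul_succ_pow_pred hm
  have hlog := logb_lt_logb (b := 3) (by norm_num) (by positivity) hpow
  rw [logb_pow, logb_pow, logb_mul (by norm_num) (by positivity), logb_self_eq_one (by norm_num),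
    Nat.cast_sub (by omega), Nat.cast_succ, Nat.cast_one] at hlog
  linarith

theorem logDefectRatio_succ_lt {m : ℕ} (hm : 2 ≤ m) :
    logDefectRatio (m + 1) < logDefectRatio m := by
  have h2 : (2 : ℝ) ≤ m := by exact_mod_cast hm
  have hlog := succ_mul_logb_three_lt hm
  rw [logDefectRatio, logDefectRatio, div_lt_div_iff₀ (by push_cast; nlinarith) (by nlinarith),
    logDefect, logDefect]
  push_cast
  nlinarith

theorem logDefectRatio_strictAntiOn : StrictAntiOn logDefectRatio (Set.Ici 2) :=
  strictAntiOn_of_succ_lt Set.ordConnected_Ici fun _ _ hm _ => logDefectRatio_succ_lt hm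

theorem logDefect_le_sum_and_eq_iff {ι : Type*} [Fintype ι] {s : ℕ} {m : ι → ℕ} (hs : 2 ≤ s)
    (hm : ∀ j, 2 ≤ m j ∧ m j ≤ s) (hsum : ∑ j, (m j).choose 2 = s.choose 2) :
    logDefect s ≤ ∑ j, logDefect (m j) ∧ (∑ j, logDefect (m j) = logDefect s ↔ ∀ j, m j = s) := by
  have hsumR : ∑ j, ((m j : ℝ) * (m j - 1)) = s * (s - 1) := by
    have h := congrArg (Nat.cast : ℕ → ℝ) hsum
    push_cast [Nat.cast_choose_two, ← sum_div] at h
    linarith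
  have hsplit : logDefect s = ∑ j, logDefectRatio s * (m j * (m j - 1)) := by
    rw [logDefect_eq_logDefectRatio_mul hs, ← hsumR, mul_sum]
  have hterm (j) : logDefectRatio s * (m j * (m j - 1)) ≤ logDefect (m j) := by
    have : (2 : ℝ) ≤ m j := by exact_mod_cast (hm j).1
    rw [logDefect_eq_logDefectRatio_mul (hm j).1]
    exact mul_le_mul_of_nonneg_right
      (logDefectRatio_strictAntiOn.antitoneOn (hm j).1 hs (hm j).2) (by nlinarith)
  have hterm_eq_iff (j) : logDefectRatio s * (m j * (m j - 1)) = logDefect (m j) ↔ m j = s := by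
    have : (2 : ℝ) ≤ m j := by exact_mod_cast (hm j).1
    rw [logDefect_eq_logDefectRatio_mul (hm j).1, mul_left_inj' (by nlinarith),
      logDefectRatio_strictAntiOn.injOn.eq_iff hs (hm j).1, eq_comm]
  refine ⟨hsplit ▸ sum_le_sum fun j _ => hterm j, ?_⟩
  rw [hsplit, eq_comm, sum_eq_sum_iff_of_le fun j _ => hterm j]
  simp only [mem_univ, true_implies, hterm_eq_iff]

theorem stmt_15_general (s ℓ : ℕ) (hs : 2 ≤ s)
    (m : Fin ℓ → ℕ) (hm : ∀ j, 2 ≤ m j ∧ m j ≤ s)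
    (hsum : (∑ j, (m j).choose 2) = s.choose 2) :
    ((s : ℝ) - 1 - Real.logb 3 (s : ℝ) ≤
      ∑ j, ((m j : ℝ) - 1 - Real.logb 3 (m j : ℝ))) ∧
    ((∑ j, ((m j : ℝ) - 1 - Real.logb 3 (m j : ℝ))) =
        (s : ℝ) - 1 - Real.logb 3 (s : ℝ) ↔
      ℓ = 1 ∧ ∀ j, m j = s) := by
  obtain ⟨hle, heq_iff⟩ := logDefect_le_sum_and_eq_iff hs hm hsum
  refine ⟨hle, heq_iff.trans ⟨fun hall => ⟨?_, hall⟩, And.right⟩⟩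
  simp only [hall, sum_const, card_univ, Fintype.card_fin, smul_eq_mul] at hsum
  exact (Nat.mul_eq_right (Nat.choose_pos hs).ne').mp hsum

theorem stmt_15 (s ℓ : ℕ) (hs : 2 ≤ s) (hl1 : 1 ≤ ℓ) (hl2 : ℓ ≤ s.choose 2)
    (m : Fin ℓ → ℕ) (hm : ∀ j, 2 ≤ m j ∧ m j ≤ s)
    (hsum : (∑ j, (m j).choose 2) = s.choose 2) :
    ((s : ℝ) - 1 - Real.logb 3 (s : ℝ) ≤
      ∑ j, ((m j : ℝ) - 1 - Real.logb 3 (m j : ℝ))) ∧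
    ((∑ j, ((m j : ℝ) - 1 - Real.logb 3 (m j : ℝ))) =
        (s : ℝ) - 1 - Real.logb 3 (s : ℝ) ↔
      ℓ = 1 ∧ ∀ j, m j = s) :=
  stmt_15_general s ℓ hs m hm hsum
end

section
/- Let G be a simple graph on a finite vertex set and let N_0 be the maximum size of a clique of G. Then every set F of vertices admits at most 2^{N_0} colourings of its elements with 2 colours in which every colour class is a clique, and every clique of size N_0 admits exactly 2^{N_0} such colourings; in particular, the maximum number of such 2-colourings over all vertex sets equals 2^{N_0} and is attained by the cliques of maximum size. -/
lemma adm_bound {V : Type*} [Fintype V] (G : SimpleGraph V) (N0 : ℕ)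
    (hN0ub : ∀ s : Finset V, G.IsClique (s : Set V) → s.card ≤ N0)
    (F : Finset V) : admCount G 2 F ≤ 2 ^ N0 := by
  classical
  set H : SimpleGraph F := (SimpleGraph.comap Subtype.val G)ᶜ with hH
  -- adjacent in H forces different colours
  have hdiff : ∀ (φ : F → Fin 2),
      (∀ c : Fin 2, G.IsClique {v : V | ∃ h : v ∈ F, φ ⟨v, h⟩ = c}) →
      ∀ a b : F, H.Adj a b → φ a ≠ φ b := by
    intro φ hφ a b hab heq
    rw [hH, SimpleGraph.compl_adj, SimpleGraph.comap_adj] at hab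
    obtain ⟨hne, hnadj⟩ := hab
    have ha : (a : V) ∈ {v : V | ∃ h : v ∈ F, φ ⟨v, h⟩ = φ b} := ⟨a.2, by simpa using heq⟩
    have hb : (b : V) ∈ {v : V | ∃ h : v ∈ F, φ ⟨v, h⟩ = φ b} := ⟨b.2, by simp⟩
    exact hnadj ((hφ (φ b)) ha hb (fun h => hne (Subtype.ext h)))
  have fin2 : ∀ x y z : Fin 2, x ≠ y → x ≠ z → y = z := by decide
  -- values propagate along walks
  have hprop : ∀ (φ ψ : F → Fin 2),
      (∀ c : Fin 2, G.IsClique {v : V | ∃ h : v ∈ F, φ ⟨v, h⟩ = c}) →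
      (∀ c : Fin 2, G.IsClique {v : V | ∃ h : v ∈ F, ψ ⟨v, h⟩ = c}) →
      ∀ a b : F, H.Reachable a b → φ a = ψ a → φ b = ψ b := by
    intro φ ψ hφ hψ a b hr
    obtain ⟨w⟩ := hr
    induction w with
    | nil => exact id
    | cons h p ih =>
      intro hstart
      apply ih
      have h1 := hdiff φ hφ _ _ h
      have h2 := hdiff ψ hψ _ _ h
      rw [hstart] at h1
      exact (fin2 _ _ _ h2 h1).symm
  -- representatives of connected components
  have hrep : Function.Surjective (H.connectedComponentMk) :=
    fun c => c.exists_rep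
  set rep : H.ConnectedComponent → F := fun c => (hrep c).choose with hrepdef
  have hrepc : ∀ c, H.connectedComponentMk (rep c) = c := fun c => (hrep c).choose_spec
  have hfinCC : Finite H.ConnectedComponent := Finite.of_surjective _ hrep
  have hFtCC : Fintype H.ConnectedComponent := Fintype.ofFinite _
  -- restriction to representatives is injective
  have hinj : Function.Injective
      (fun φ : {φ : F → Fin 2 //
          ∀ c : Fin 2, G.IsClique {v : V | ∃ h : v ∈ F, φ ⟨v, h⟩ = c}} =>
        (fun c => φ.1 (rep c) : H.ConnectedComponent → Fin 2)) := by
    intro φ ψ h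
    apply Subtype.ext
    funext v
    have hr : H.Reachable (rep (H.connectedComponentMk v)) v := by
      rw [← SimpleGraph.ConnectedComponent.eq, hrepc]
    exact hprop φ.1 ψ.1 φ.2 ψ.2 _ v hr (congrFun h (H.connectedComponentMk v))
  have hle := Nat.card_le_card_of_injective _ hinj
  rw [Nat.card_fun, Nat.card_eq_fintype_card (α := Fin 2), Fintype.card_fin,
    Nat.card_eq_fintype_card (α := H.ConnectedComponent)] at hle
  refine le_trans hle (Nat.pow_le_pow_right (by norm_num) ?_)
  -- the representatives form a clique in G
  set S : Finset V := Finset.univ.image (fun c => ((rep c : F) : V)) with hS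
  have hrinj : Function.Injective (fun c => ((rep c : F) : V)) := by
    intro c d h
    rw [← hrepc c, ← hrepc d]
    congr 1
    exact Subtype.ext h
  have hclique : G.IsClique (S : Set V) := by
    intro x hx y hy hxy
    simp only [hS, Finset.coe_image, Set.mem_image, Finset.coe_univ, Set.mem_univ,
      true_and] at hx hy
    obtain ⟨c, rfl⟩ := hx
    obtain ⟨d, rfl⟩ := hy
    have hcd : c ≠ d := fun h => hxy (by rw [h])
    have hnadj : ¬ H.Adj (rep c) (rep d) := by
      intro hadj
      exact hcd (by rw [← hrepc c, ← hrepc d]; exact SimpleGraph.ConnectedComponent.sound hadj.reachable)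
    rw [hH, SimpleGraph.compl_adj, SimpleGraph.comap_adj] at hnadj
    push_neg at hnadj
    exact hnadj (fun h => hxy (congrArg Subtype.val h))
  have hcard : S.card = Fintype.card H.ConnectedComponent := by
    rw [hS, Finset.card_image_of_injective _ hrinj, Finset.card_univ]
  rw [← hcard]
  exact hN0ub S hclique

theorem stmt_19 {V : Type*} [Fintype V] (G : SimpleGraph V) (N0 : ℕ)
    -- `N0` is the maximum size of a clique of `G`
    (hN0ub : ∀ s : Finset V, G.IsClique (s : Set V) → s.card ≤ N0)
    (hN0ex : ∃ s : Finset V, G.IsClique (s : Set V) ∧ s.card = N0) :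
    -- every vertex set admits at most `2 ^ N0` admissible `2`-colourings
    (∀ F : Finset V, admCount G 2 F ≤ 2 ^ N0) ∧
    -- every clique of size `N0` admits exactly `2 ^ N0` of them
    (∀ F : Finset V, G.IsClique (F : Set V) → F.card = N0 →
      admCount G 2 F = 2 ^ N0) ∧
    -- in particular, the maximum over all vertex sets equals `2 ^ N0` and is attained
    IsGreatest {c : ℕ | ∃ F : Finset V, admCount G 2 F = c} (2 ^ N0) := by
  classical
  have hexact : ∀ F : Finset V, G.IsClique (F : Set V) → F.card = N0 →
      admCount G 2 F = 2 ^ N0 := by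
    intro F hF hcard
    have hall : ∀ φ : F → Fin 2, ∀ c : Fin 2,
        G.IsClique {v : V | ∃ h : v ∈ F, φ ⟨v, h⟩ = c} := by
      intro φ c
      apply hF.subset
      rintro v ⟨hv, -⟩
      exact hv
    unfold admCount
    rw [Nat.card_congr (Equiv.subtypeUnivEquiv (fun φ => hall φ))]
    rw [Nat.card_eq_fintype_card, Fintype.card_fun, Fintype.card_fin, Fintype.card_coe, hcard]
  refine ⟨adm_bound G N0 hN0ub, hexact, ?_, ?_⟩
  · obtain ⟨s, hs, hcard⟩ := hN0ex
    exact ⟨s, hexact s hs hcard⟩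
  · rintro c ⟨F, rfl⟩
    exact adm_bound G N0 hN0ub F
end
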